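/- arXiv:1503.06487 — 14 statements merged into one kernel-verified Lean document; each statement's English description precedes it below -/
import Mathlib

section
/- Let K be a field and L a Lie algebra over K. If i₁ and i₂ are megaideals of L, then their Lie product [i₁, i₂], i.e., the K-subspace of L spanned by all brackets [x, y] with x ∈ i₁ and y ∈ i₂, is also a megaideal of L. -/
/-- A megaideal (fully characteristic ideal) of a Lie algebra `L` over a field `K` is a
`K`-subspace `i` of `L` such that `e(i) ⊆ i` for every Lie algebra automorphism `e` of `L`. -/
def IsMegaideal (K : Type*) {L : Type*} [Field K] [LieRing L] [LieAlgebra K L]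
    (i : Submodule K L) : Prop :=
  ∀ e : L ≃ₗ⁅K⁆ L, ∀ x ∈ i, e x ∈ i

/-- The Lie product `[i₁, i₂]`, i.e. the `K`-subspace spanned by all the brackets `⁅x, y⁆`
with `x ∈ i₁` and `y ∈ i₂`, of two megaideals is a megaideal. -/
theorem IsMegaideal.lieProduct {K L : Type*} [Field K] [LieRing L] [LieAlgebra K L]
    {i₁ i₂ : Submodule K L} (h₁ : IsMegaideal K i₁) (h₂ : IsMegaideal K i₂) :
    IsMegaideal K (Submodule.span K {z : L | ∃ x ∈ i₁, ∃ y ∈ i₂, z = ⁅x, y⁆}) := by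
  intro e x hx
  induction hx using Submodule.span_induction with
  | mem z hz =>
    obtain ⟨a, ha, b, hb, rfl⟩ := hz
    apply Submodule.subset_span
    exact ⟨e a, h₁ e a ha, e b, h₂ e b hb, e.map_lie a b⟩
  | zero => rw [show e 0 = 0 from map_zero e.toLinearEquiv]; exact Submodule.zero_mem _
  | add a b _ _ ha hb => rw [show e (a+b) = e a + e b from map_add e.toLinearEquiv a b]; exact Submodule.add_mem _ ha hb
  | smul c a _ ha => rw [show e (c • a) = c • e a from map_smul e.toLinearEquiv c a]; exact Submodule.smul_mem _ c ha
end

section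
/- Let K be a field and L a Lie algebra over K. Let i₁ be a megaideal of L that is closed under the Lie bracket (so that i₁ is itself a Lie algebra over K), and let i₂ ⊆ i₁ be a megaideal of the Lie algebra i₁. Then i₂ is a megaideal of L. In other words, megaideals of megaideals are again megaideals. -/
/-- Megaideals of megaideals are again megaideals: if `i₁` is a megaideal of `L` that is
closed under the Lie bracket (formalized as a Lie subalgebra `S` whose underlying subspace is
a megaideal of `L`) and `i₂` is a megaideal of the Lie algebra `S`, then `i₂`, viewed inside
`L`, is a megaideal of `L`. -/
theorem IsMegaideal.of_isMegaideal_isMegaideal {K L : Type*} [Field K] [LieRing L]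
    [LieAlgebra K L] (S : LieSubalgebra K L) (hS : IsMegaideal K S.toSubmodule)
    (i₂ : Submodule K S) (hi₂ : IsMegaideal K i₂) :
    IsMegaideal K (i₂.map S.incl.toLinearMap) := by
  intro e x hx
  obtain ⟨y, hy, rfl⟩ := hx
  let e' : S ≃ₗ⁅K⁆ S :=
    { toFun := fun s => ⟨e s, hS e s s.2⟩
      invFun := fun s => ⟨e.symm s, hS e.symm s s.2⟩
      map_add' := fun a b => Subtype.ext (e.toLinearEquiv.map_add a.1 b.1)
      map_smul' := fun c a => Subtype.ext (e.toLinearEquiv.map_smul c a.1)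
      map_lie' := by intro a b; exact Subtype.ext (LieHom.map_lie e.toLieHom a.1 b.1)
      left_inv := fun a => Subtype.ext (by simp)
      right_inv := fun a => Subtype.ext (by simp) }
  exact ⟨e' y, hi₂ e' y hy, rfl⟩
end

section
/- Let K be a field and L a Lie algebra over K. If i is a megaideal of L, then its centralizer C_L(i) = { x ∈ L : [x, y] = 0 for all y ∈ i } is also a megaideal of L. -/
/-- The centralizer `C_L(i) = { x ∈ L : [x, y] = 0 for all y ∈ i }` of a megaideal `i`
is a `K`-subspace of `L` and is a megaideal of `L`. -/
theorem IsMegaideal.centralizer {K L : Type*} [Field K] [LieRing L] [LieAlgebra K L]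
    {i : Submodule K L} (hi : IsMegaideal K i) :
    ∃ c : Submodule K L, (c : Set L) = {x : L | ∀ y ∈ i, ⁅x, y⁆ = 0} ∧ IsMegaideal K c := by
  refine ⟨{ carrier := {x : L | ∀ y ∈ i, ⁅x, y⁆ = 0}
            add_mem' := fun {a b} ha hb y hy => by rw [add_lie, ha y hy, hb y hy, add_zero]
            zero_mem' := fun y hy => zero_lie y
            smul_mem' := fun c a ha y hy => by rw [smul_lie, ha y hy, smul_zero] }, rfl, ?_⟩
  intro e x hx y hy
  have h1 : e.symm y ∈ i := hi e.symm y hy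
  have h2 : ⁅x, e.symm y⁆ = 0 := hx _ h1
  have := e.map_lie x (e.symm y)
  rw [h2, e.apply_symm_apply] at this
  rw [← this]; exact e.toLinearEquiv.map_zero
end

section
/- Let K be a field and L a Lie algebra over K. If i is a megaideal of L, then its normalizer N_L(i) = { x ∈ L : [x, y] ∈ i for all y ∈ i } is also a megaideal of L. -/
/-- The normalizer `N_L(i) = { x ∈ L : [x, y] ∈ i for all y ∈ i }` of a megaideal `i`
is a `K`-subspace of `L` and is a megaideal of `L`. -/
theorem IsMegaideal.normalizer {K L : Type*} [Field K] [LieRing L] [LieAlgebra K L]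
    {i : Submodule K L} (hi : IsMegaideal K i) :
    ∃ n : Submodule K L, (n : Set L) = {x : L | ∀ y ∈ i, ⁅x, y⁆ ∈ i} ∧ IsMegaideal K n := by
  refine ⟨{ carrier := {x : L | ∀ y ∈ i, ⁅x, y⁆ ∈ i}
            add_mem' := ?_
            zero_mem' := ?_
            smul_mem' := ?_ }, rfl, ?_⟩
  · intro a b ha hb y hy
    rw [add_lie]
    exact i.add_mem (ha y hy) (hb y hy)
  · intro y hy
    simp
  · intro c x hx y hy
    rw [smul_lie]
    exact i.smul_mem c (hx y hy)
  · intro e x hx y hy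
    have hz : e.symm y ∈ i := hi e.symm y hy
    have := hx _ hz
    have h2 : e ⁅x, e.symm y⁆ ∈ i := hi e _ this
    rwa [LieEquiv.map_lie, LieEquiv.apply_symm_apply] at h2
end

section
/- Let K be a field and L a Lie algebra over K. If i₀, i₁ and i₂ are megaideals of L, then the set s = { z₀ ∈ i₀ : [z₀, z₁] ∈ i₂ for all z₁ ∈ i₁ } is a K-subspace of L and is a megaideal of L. -/
/-- If `i₀`, `i₁` and `i₂` are megaideals of `L`, then the set
`s = { z₀ ∈ i₀ : [z₀, z₁] ∈ i₂ for all z₁ ∈ i₁ }` is a `K`-subspace of `L`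
and is a megaideal of `L`. -/
theorem isMegaideal_relativeSet {K L : Type*} [Field K] [LieRing L] [LieAlgebra K L]
    {i₀ i₁ i₂ : Submodule K L} (h₀ : IsMegaideal K i₀) (h₁ : IsMegaideal K i₁)
    (h₂ : IsMegaideal K i₂) :
    ∃ s : Submodule K L,
      (s : Set L) = {z₀ : L | z₀ ∈ i₀ ∧ ∀ z₁ ∈ i₁, ⁅z₀, z₁⁆ ∈ i₂} ∧ IsMegaideal K s := by
  refine ⟨{ carrier := {z₀ : L | z₀ ∈ i₀ ∧ ∀ z₁ ∈ i₁, ⁅z₀, z₁⁆ ∈ i₂}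
            add_mem' := ?_
            zero_mem' := ?_
            smul_mem' := ?_ }, rfl, ?_⟩
  · rintro a b ⟨ha0, ha⟩ ⟨hb0, hb⟩
    exact ⟨i₀.add_mem ha0 hb0, fun z₁ hz₁ => by
      rw [add_lie]; exact i₂.add_mem (ha z₁ hz₁) (hb z₁ hz₁)⟩
  · exact ⟨i₀.zero_mem, fun z₁ hz₁ => by rw [zero_lie]; exact i₂.zero_mem⟩
  · rintro c a ⟨ha0, ha⟩
    exact ⟨i₀.smul_mem c ha0, fun z₁ hz₁ => by
      rw [smul_lie]; exact i₂.smul_mem c (ha z₁ hz₁)⟩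
  · rintro e x ⟨hx0, hx⟩
    refine ⟨h₀ e x hx0, fun z₁ hz₁ => ?_⟩
    have : ⁅(e : L ≃ₗ⁅K⁆ L) x, z₁⁆ = e ⁅x, e.symm z₁⁆ := by
      rw [LieEquiv.map_lie, e.apply_symm_apply]
    rw [this]
    exact h₂ e _ (hx _ (h₁ e.symm z₁ hz₁))
end

section
/- Let L be a finite-dimensional Lie algebra over ℝ and let i be a megaideal of L. Then i is invariant under every derivation of L, i.e., for every ℝ-linear map D : L → L satisfying D([x, y]) = [D(x), y] + [x, D(y)] for all x, y ∈ L, one has D(i) ⊆ i. In other words, every megaideal of a finite-dimensional real Lie algebra is a characteristic ideal. -/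
open NormedSpace
set_option maxHeartbeats 1000000
set_option synthInstance.maxHeartbeats 400000

/-- Every megaideal of a finite-dimensional real Lie algebra is a characteristic ideal:
it is invariant under every derivation of the Lie algebra. -/
theorem IsMegaideal.map_derivation_mem {L : Type*} [LieRing L] [LieAlgebra ℝ L]
    [FiniteDimensional ℝ L] {i : Submodule ℝ L} (hi : IsMegaideal ℝ i)
    (D : L →ₗ[ℝ] L) (hD : ∀ x y : L, D ⁅x, y⁆ = ⁅D x, y⁆ + ⁅x, D y⁆) :
    ∀ x ∈ i, D x ∈ i := by
  intro x hx
  let b := Module.Basis.ofVectorSpace ℝ L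
  letI : NormedAddCommGroup L :=
    NormedAddCommGroup.induced L (Module.Basis.ofVectorSpaceIndex ℝ L → ℝ) b.equivFun
      b.equivFun.injective
  letI : NormedSpace ℝ L :=
    NormedSpace.induced ℝ L (Module.Basis.ofVectorSpaceIndex ℝ L → ℝ) b.equivFun
  let D' : L →L[ℝ] L := LinearMap.toContinuousLinearMap D
  -- the continuous bilinear bracket
  let B : L →L[ℝ] L →L[ℝ] L :=
    LinearMap.toContinuousLinearMap
      { toFun := fun u => LinearMap.toContinuousLinearMap
          ((LieAlgebra.ad ℝ L u : Module.End ℝ L) : L →ₗ[ℝ] L)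
        map_add' := fun u v => by ext z; simp
        map_smul' := fun c u => by ext z; simp }
  have hB : ∀ u v : L, B u v = ⁅u, v⁆ := fun u v => rfl
  letI : NormedAlgebra ℚ (L →L[ℝ] L) := NormedAlgebra.restrictScalars ℚ ℝ _
  -- exp of a multiple of D' is a Lie algebra morphism
  have key : ∀ (t : ℝ) (u v : L),
      exp (t • D') ⁅u, v⁆ = ⁅exp (t • D') u, exp (t • D') v⁆ := by
    intro t u v
    set h : ℝ → L := fun s => exp (s • (-D')) (B (exp (s • D') u) (exp (s • D') v))
      with hdef
    have key0 : ∀ s : ℝ, HasDerivAt h 0 s := by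
      intro s
      have hfx : HasDerivAt (fun r : ℝ => exp (r • D') u) (D' (exp (s • D') u)) s := by
        simpa using (hasDerivAt_exp_smul_const' (𝕂 := ℝ) D' s).clm_apply (hasDerivAt_const s u)
      have hfy : HasDerivAt (fun r : ℝ => exp (r • D') v) (D' (exp (s • D') v)) s := by
        simpa using (hasDerivAt_exp_smul_const' (𝕂 := ℝ) D' s).clm_apply (hasDerivAt_const s v)
      have hB1 : HasDerivAt (fun r : ℝ => B (exp (r • D') u))
          (B (D' (exp (s • D') u))) s :=
        B.hasFDerivAt.comp_hasDerivAt s hfx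
      have hw := hB1.clm_apply hfy
      have hC : HasDerivAt (fun r : ℝ => exp (r • (-D'))) ((-D') * exp (s • (-D'))) s :=
        hasDerivAt_exp_smul_const' (𝕂 := ℝ) (-D') s
      have htot := hC.clm_apply hw
      rw [hdef]
      convert htot using 1
      case e'_4 => rfl
      set P := exp (s • D') with hP
      set Q := exp (s • (-D')) with hQ
      have hcomm : Commute D' Q := by
        rw [hQ, smul_neg]
        exact (Commute.neg_right (Commute.smul_right (Commute.refl D') s)).exp_right
      have hQD : ∀ z : L, D' (Q z) = Q (D' z) := fun z => DFunLike.congr_fun hcomm.eq z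
      have hder : D' (B (P u) (P v)) = B (D' (P u)) (P v) + B (P u) (D' (P v)) := by
        simp only [hB]
        show D ⁅P u, P v⁆ = ⁅D (P u), P v⁆ + ⁅P u, D (P v)⁆
        exact hD (P u) (P v)
      simp only [ContinuousLinearMap.mul_apply, ContinuousLinearMap.neg_apply]
      rw [← hder, ← hQD]
      simp
    have hconst : h t = h 0 :=
      is_const_of_deriv_eq_zero (fun r => (key0 r).differentiableAt)
        (fun r => (key0 r).deriv) t 0
    have h0 : h 0 = ⁅u, v⁆ := by simp [hdef, exp_zero, hB]
    have hmul : exp (t • D') * exp (t • (-D')) = 1 := by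
      rw [smul_neg, ← exp_add_of_commute (Commute.neg_right (Commute.refl (t • D' : L →L[ℝ] L)))]
      simp [exp_zero]
    have := congrArg (fun z => exp (t • D') z) (hconst.trans h0)
    simp only [hdef] at this
    rw [← this]
    have : exp (t • D') (exp (t • (-D'))
        (B (exp (t • D') u) (exp (t • D') v)))
        = (exp (t • D') * exp (t • (-D'))) (B (exp (t • D') u) (exp (t • D') v)) := rfl
    rw [this, hmul]
    simp [hB]
  -- build Lie algebra automorphisms and conclude membership
  have hmem : ∀ t : ℝ, exp (t • D') x ∈ i := by
    intro t
    have hmul1 : exp (t • (-D')) * exp (t • D') = 1 := by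
      rw [smul_neg, ← exp_add_of_commute (Commute.neg_left (Commute.refl (t • D' : L →L[ℝ] L)))]
      simp [exp_zero]
    have hmul2 : exp (t • D') * exp (t • (-D')) = 1 := by
      rw [smul_neg, ← exp_add_of_commute (Commute.neg_right (Commute.refl (t • D' : L →L[ℝ] L)))]
      simp [exp_zero]
    let e : L ≃ₗ⁅ℝ⁆ L :=
      { toFun := ⇑(exp (t • D') : L →L[ℝ] L)
        map_add' := map_add _
        map_smul' := map_smul _
        map_lie' := by intro u v; exact key t u v
        invFun := ⇑(exp (t • (-D')) : L →L[ℝ] L)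
        left_inv := fun z => by
          have := DFunLike.congr_fun hmul1 z
          simpa [ContinuousLinearMap.mul_apply] using this
        right_inv := fun z => by
          have := DFunLike.congr_fun hmul2 z
          simpa [ContinuousLinearMap.mul_apply] using this }
    exact hi e x hx
  -- differentiate at 0
  have hf : HasDerivAt (fun t : ℝ => exp (t • D') x) (D x) 0 := by
    have := (hasDerivAt_exp_smul_const (𝕂 := ℝ) D' 0).clm_apply (hasDerivAt_const (0 : ℝ) x)
    simp [exp_zero] at this
    exact this
  have hclosed : IsClosed (i : Set L) := Submodule.closed_of_finiteDimensional i
  refine hclosed.mem_of_tendsto (hasDerivAt_iff_tendsto_slope.1 hf) ?_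
  refine Filter.Eventually.of_forall fun t => ?_
  have hf0 : exp ((0 : ℝ) • D') x = x := by simp [exp_zero]
  simp only [slope_def_module, hf0]
  exact i.smul_mem _ (i.sub_mem (hmem t) hx)
end

section
/- Let L be a finite-dimensional Lie algebra over ℝ and let i be a megaideal of L. Then i is a Lie ideal of L, i.e., [x, y] ∈ i for every x ∈ L and y ∈ i. -/
open NormedSpace

section Aux

variable {V : Type*} [NormedAddCommGroup V] [NormedSpace ℝ V] [CompleteSpace V]

theorem exp_apply_hasDerivAt (D : V →L[ℝ] V) (a : V) (s : ℝ) :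
    HasDerivAt (fun t : ℝ => exp (t • D) a) (D (exp (s • D) a)) s := by
  have h := (hasDerivAt_exp_smul_const' (𝕂 := ℝ) D s).clm_apply (hasDerivAt_const s a)
  simpa [ContinuousLinearMap.mul_apply] using h

theorem exp_hom_of_derivation (β : V →L[ℝ] V →L[ℝ] V) (D : V →L[ℝ] V)
    (hD : ∀ a b, D (β a b) = β (D a) b + β a (D b)) (t : ℝ) (a b : V) :
    exp (t • D) (β a b) = β (exp (t • D) a) (exp (t • D) b) := by
  set f : ℝ → V :=
    fun s => exp (-(s • D)) (β (exp (s • D) a) (exp (s • D) b)) with hfdef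
  have hderiv : ∀ s : ℝ, HasDerivAt f 0 s := by
    intro s
    have hu := exp_apply_hasDerivAt D a s
    have hv := exp_apply_hasDerivAt D b s
    have hc : HasDerivAt (fun s : ℝ => β (exp (s • D) a))
        (β (D (exp (s • D) a))) s := β.hasFDerivAt.comp_hasDerivAt s hu
    have hm : HasDerivAt (fun s : ℝ => β (exp (s • D) a) (exp (s • D) b))
        (D (β (exp (s • D) a) (exp (s • D) b))) s := by
      rw [hD]; exact hc.clm_apply hv
    have hE : HasDerivAt (fun s : ℝ => exp (-(s • D)))
        (exp (-(s • D)) * (-D)) s := by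
      simpa [smul_neg] using hasDerivAt_exp_smul_const (𝕂 := ℝ) (-D) s
    have h := hE.clm_apply hm
    simpa [ContinuousLinearMap.mul_apply] using h
  have hconst : f t = f 0 :=
    is_const_of_deriv_eq_zero (fun s => (hderiv s).differentiableAt)
      (fun s => (hderiv s).deriv) t 0
  have hzero : f 0 = β a b := by simp [hfdef, exp_zero]
  have key : exp (-(t • D)) (β (exp (t • D) a) (exp (t • D) b)) = β a b := by
    rw [← hzero]; exact hconst
  have hmul : exp (t • D) * exp (-(t • D)) = 1 := by
    rw [← exp_add_of_commute_of_mem_ball (𝕂 := ℝ) ((Commute.refl (t • D)).neg_right)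
      ((expSeries_radius_eq_top ℝ (V →L[ℝ] V)).symm ▸ edist_lt_top _ _)
      ((expSeries_radius_eq_top ℝ (V →L[ℝ] V)).symm ▸ edist_lt_top _ _)]
    simp [exp_zero]
  calc exp (t • D) (β a b)
      = exp (t • D) (exp (-(t • D)) (β (exp (t • D) a) (exp (t • D) b))) := by
        rw [key]
    _ = (exp (t • D) * exp (-(t • D))) (β (exp (t • D) a) (exp (t • D) b)) := rfl
    _ = _ := by rw [hmul]; simp

end Aux

/-- Every megaideal of a finite-dimensional real Lie algebra is a Lie ideal:
`[x, y] ∈ i` for every `x ∈ L` and `y ∈ i`. -/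
theorem IsMegaideal.lie_mem {L : Type*} [LieRing L] [LieAlgebra ℝ L]
    [FiniteDimensional ℝ L] {i : Submodule ℝ L} (hi : IsMegaideal ℝ i) :
    ∀ x y : L, y ∈ i → ⁅x, y⁆ ∈ i := by
  intro x y hy
  -- Endow `L` with a norm induced from a linear equivalence with a Euclidean space.
  let φ : L ≃ₗ[ℝ] (Fin (Module.finrank ℝ L) → ℝ) := (Module.finBasis ℝ L).equivFun
  letI : NormedAddCommGroup L :=
    NormedAddCommGroup.induced L (Fin (Module.finrank ℝ L) → ℝ) φ.toLinearMap φ.injective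
  letI : NormedSpace ℝ L :=
    NormedSpace.induced ℝ L (Fin (Module.finrank ℝ L) → ℝ) φ.toLinearMap
  haveI : CompleteSpace L := FiniteDimensional.complete ℝ L
  -- The bracket as a continuous bilinear map.
  let c₁ : L →ₗ[ℝ] (L →L[ℝ] L) :=
    (LinearMap.toContinuousLinearMap : (L →ₗ[ℝ] L) ≃ₗ[ℝ] (L →L[ℝ] L)).toLinearMap ∘ₗ
      LinearMap.mk₂ ℝ (fun a b : L => ⁅a, b⁆) add_lie smul_lie lie_add lie_smul
  let β : L →L[ℝ] L →L[ℝ] L := LinearMap.toContinuousLinearMap c₁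
  have hβ : ∀ a b : L, β a b = ⁅a, b⁆ := fun a b => by
    simp [β, c₁, LieAlgebra.ad_apply]
  let D : L →L[ℝ] L := β x
  have hD : ∀ a b : L, D (β a b) = β (D a) b + β a (D b) := fun a b => by
    simp only [D, hβ]
    exact leibniz_lie x a b
  -- `exp (t • D)` is a Lie algebra automorphism.
  have hmul : ∀ t : ℝ, exp (t • D) * exp (-(t • D)) = 1 := fun t => by
    rw [← exp_add_of_commute_of_mem_ball (𝕂 := ℝ) ((Commute.refl (t • D)).neg_right)
      ((expSeries_radius_eq_top ℝ (L →L[ℝ] L)).symm ▸ edist_lt_top _ _)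
      ((expSeries_radius_eq_top ℝ (L →L[ℝ] L)).symm ▸ edist_lt_top _ _)]
    simp [exp_zero]
  have hmul' : ∀ t : ℝ, exp (-(t • D)) * exp (t • D) = 1 := fun t => by
    rw [← exp_add_of_commute_of_mem_ball (𝕂 := ℝ) ((Commute.refl (t • D)).neg_left)
      ((expSeries_radius_eq_top ℝ (L →L[ℝ] L)).symm ▸ edist_lt_top _ _)
      ((expSeries_radius_eq_top ℝ (L →L[ℝ] L)).symm ▸ edist_lt_top _ _)]
    simp [exp_zero]
  let e : ℝ → (L ≃ₗ⁅ℝ⁆ L) := fun t =>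
    { toLinearMap := (exp (t • D) : L →L[ℝ] L).toLinearMap
      map_lie' := fun {a b} => by
        have h := exp_hom_of_derivation β D hD t a b
        simpa [hβ] using h
      invFun := fun v => exp (-(t • D)) v
      left_inv := fun v => by
        have h := congrArg (fun A : L →L[ℝ] L => A v) (hmul' t)
        simpa [ContinuousLinearMap.mul_apply] using h
      right_inv := fun v => by
        have h := congrArg (fun A : L →L[ℝ] L => A v) (hmul t)
        simpa [ContinuousLinearMap.mul_apply] using h }
  have hmem : ∀ t : ℝ, exp (t • D) y ∈ i := fun t => hi (e t) y hy
  -- Differentiate at `t = 0`.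
  have hd : HasDerivAt (fun t : ℝ => exp (t • D) y) (D y) 0 := by
    have h := exp_apply_hasDerivAt D y 0
    simpa [exp_zero] using h
  have hDy : D y = ⁅x, y⁆ := hβ x y
  have hclosed : IsClosed (i : Set L) := Submodule.closed_of_finiteDimensional i
  rw [← hDy]
  have hslope := hasDerivAt_iff_tendsto_slope.mp hd
  refine hclosed.mem_of_tendsto hslope ?_
  filter_upwards with t
  have : slope (fun t : ℝ => exp (t • D) y) 0 t
      = (t - 0)⁻¹ • (exp (t • D) y - exp ((0 : ℝ) • D) y) := rfl
  rw [this]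
  exact i.smul_mem _ (i.sub_mem (hmem t) (hmem 0))
end

section
/- Let L be a Lie algebra over ℝ with a basis b₀, b₁, b₂, b₃, b₄ (as an ℝ-vector space) whose Lie brackets are determined by [b₃, b₄] = b₃, [b₃, b₁] = b₀, [b₃, b₂] = 2·b₁, [b₄, b₁] = b₁, [b₄, b₂] = 2·b₂, and all other brackets of basis elements equal to zero (in particular b₀ is central and [b₁, b₂] = 0). Then every Lie algebra automorphism A of L preserves each of the subspaces span{b₀}, span{b₀, b₁}, span{b₀, b₁, b₂} and span{b₀, b₁, b₂, b₃}; consequently the matrix of A in the basis (b₀, b₁, b₂, b₃, b₄) is upper triangular with nonzero diagonal entries. -/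
section Aux

variable {L : Type*} [LieRing L] [LieAlgebra ℝ L] (b : Module.Basis (Fin 5) ℝ L)

/-! ### Characterisations of the relevant spans in terms of coordinates -/

lemma aux_mem_span0 {x : L} (hx : x ∈ Submodule.span ℝ ({b 0} : Set L)) :
    b.repr x 1 = 0 ∧ b.repr x 2 = 0 ∧ b.repr x 3 = 0 ∧ b.repr x 4 = 0 := by
  induction hx using Submodule.span_induction with
  | mem y hy =>
    simp only [Set.mem_singleton_iff] at hy
    subst hy
    simp [Finsupp.single_apply]
  | zero => simp
  | add u v _ _ hu hv => simp [hu.1, hu.2.1, hu.2.2.1, hu.2.2.2, hv.1, hv.2.1, hv.2.2.1, hv.2.2.2]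
  | smul a u _ hu => simp [hu.1, hu.2.1, hu.2.2.1, hu.2.2.2]

lemma aux_mem_span0' {x : L} (h1 : b.repr x 1 = 0) (h2 : b.repr x 2 = 0)
    (h3 : b.repr x 3 = 0) (h4 : b.repr x 4 = 0) :
    x ∈ Submodule.span ℝ ({b 0} : Set L) := by
  have hx := b.sum_repr x
  rw [Fin.sum_univ_five, h1, h2, h3, h4] at hx
  simp only [zero_smul, add_zero] at hx
  rw [← hx]
  exact Submodule.smul_mem _ _ (Submodule.subset_span (by simp))

lemma aux_mem_span1 {x : L} (hx : x ∈ Submodule.span ℝ ({b 0, b 1} : Set L)) :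
    b.repr x 2 = 0 ∧ b.repr x 3 = 0 ∧ b.repr x 4 = 0 := by
  induction hx using Submodule.span_induction with
  | mem y hy =>
    simp only [Set.mem_insert_iff, Set.mem_singleton_iff] at hy
    rcases hy with rfl | rfl <;> simp [Finsupp.single_apply]
  | zero => simp
  | add u v _ _ hu hv => simp [hu.1, hu.2.1, hu.2.2, hv.1, hv.2.1, hv.2.2]
  | smul a u _ hu => simp [hu.1, hu.2.1, hu.2.2]

lemma aux_mem_span1' {x : L} (h2 : b.repr x 2 = 0) (h3 : b.repr x 3 = 0)
    (h4 : b.repr x 4 = 0) :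
    x ∈ Submodule.span ℝ ({b 0, b 1} : Set L) := by
  have hx := b.sum_repr x
  rw [Fin.sum_univ_five, h2, h3, h4] at hx
  simp only [zero_smul, add_zero] at hx
  rw [← hx]
  exact Submodule.add_mem _
    (Submodule.smul_mem _ _ (Submodule.subset_span (by simp)))
    (Submodule.smul_mem _ _ (Submodule.subset_span (by simp)))

lemma aux_mem_span2 {x : L} (hx : x ∈ Submodule.span ℝ ({b 0, b 1, b 2} : Set L)) :
    b.repr x 3 = 0 ∧ b.repr x 4 = 0 := by
  induction hx using Submodule.span_induction with
  | mem y hy =>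
    simp only [Set.mem_insert_iff, Set.mem_singleton_iff] at hy
    rcases hy with rfl | rfl | rfl <;> simp [Finsupp.single_apply]
  | zero => simp
  | add u v _ _ hu hv => simp [hu.1, hu.2, hv.1, hv.2]
  | smul a u _ hu => simp [hu.1, hu.2]

lemma aux_mem_span2' {x : L} (h3 : b.repr x 3 = 0) (h4 : b.repr x 4 = 0) :
    x ∈ Submodule.span ℝ ({b 0, b 1, b 2} : Set L) := by
  have hx := b.sum_repr x
  rw [Fin.sum_univ_five, h3, h4] at hx
  simp only [zero_smul, add_zero] at hx
  rw [← hx]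
  refine Submodule.add_mem _ (Submodule.add_mem _ ?_ ?_) ?_ <;>
    exact Submodule.smul_mem _ _ (Submodule.subset_span (by simp))

lemma aux_mem_span3 {x : L} (hx : x ∈ Submodule.span ℝ ({b 0, b 1, b 2, b 3} : Set L)) :
    b.repr x 4 = 0 := by
  induction hx using Submodule.span_induction with
  | mem y hy =>
    simp only [Set.mem_insert_iff, Set.mem_singleton_iff] at hy
    rcases hy with rfl | rfl | rfl | rfl <;> simp [Finsupp.single_apply]
  | zero => simp
  | add u v _ _ hu hv => simp [hu, hv]
  | smul a u _ hu => simp [hu]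

lemma aux_mem_span3' {x : L} (h4 : b.repr x 4 = 0) :
    x ∈ Submodule.span ℝ ({b 0, b 1, b 2, b 3} : Set L) := by
  have hx := b.sum_repr x
  rw [Fin.sum_univ_five, h4] at hx
  simp only [zero_smul, add_zero] at hx
  rw [← hx]
  refine Submodule.add_mem _ (Submodule.add_mem _ (Submodule.add_mem _ ?_ ?_) ?_) ?_ <;>
    exact Submodule.smul_mem _ _ (Submodule.subset_span (by simp))

/-! ### The structure constants -/

variable (h34 : ⁅b 3, b 4⁆ = b 3) (h31 : ⁅b 3, b 1⁆ = b 0) (h32 : ⁅b 3, b 2⁆ = (2 : ℝ) • b 1)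
    (h41 : ⁅b 4, b 1⁆ = b 1) (h42 : ⁅b 4, b 2⁆ = (2 : ℝ) • b 2)
    (h01 : ⁅b 0, b 1⁆ = 0) (h02 : ⁅b 0, b 2⁆ = 0) (h03 : ⁅b 0, b 3⁆ = 0)
    (h04 : ⁅b 0, b 4⁆ = 0) (h12 : ⁅b 1, b 2⁆ = 0)

include h34 h31 h32 h41 h42 h01 h02 h03 h04 h12

/-- The bracket of two general elements, in coordinates. -/
lemma aux_bracket_eq (x y : L) :
    ⁅x, y⁆ = (b.repr x 3 * b.repr y 1 - b.repr x 1 * b.repr y 3) • b 0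
      + (2 * b.repr x 3 * b.repr y 2 - 2 * b.repr x 2 * b.repr y 3
          + b.repr x 4 * b.repr y 1 - b.repr x 1 * b.repr y 4) • b 1
      + (2 * (b.repr x 4 * b.repr y 2) - 2 * (b.repr x 2 * b.repr y 4)) • b 2
      + (b.repr x 3 * b.repr y 4 - b.repr x 4 * b.repr y 3) • b 3 := by
  have h43 : ⁅b 4, b 3⁆ = -b 3 := by rw [← lie_skew, h34]
  have h13 : ⁅b 1, b 3⁆ = -b 0 := by rw [← lie_skew, h31]
  have h23 : ⁅b 2, b 3⁆ = -((2 : ℝ) • b 1) := by rw [← lie_skew, h32]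
  have h14 : ⁅b 1, b 4⁆ = -b 1 := by rw [← lie_skew, h41]
  have h24 : ⁅b 2, b 4⁆ = -((2 : ℝ) • b 2) := by rw [← lie_skew, h42]
  have h10 : ⁅b 1, b 0⁆ = 0 := by rw [← lie_skew, h01, neg_zero]
  have h20 : ⁅b 2, b 0⁆ = 0 := by rw [← lie_skew, h02, neg_zero]
  have h30 : ⁅b 3, b 0⁆ = 0 := by rw [← lie_skew, h03, neg_zero]
  have h40 : ⁅b 4, b 0⁆ = 0 := by rw [← lie_skew, h04, neg_zero]
  have h21 : ⁅b 2, b 1⁆ = 0 := by rw [← lie_skew, h12, neg_zero]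
  conv_lhs => rw [← b.sum_repr x, ← b.sum_repr y]
  rw [Fin.sum_univ_five, Fin.sum_univ_five]
  simp only [add_lie, lie_add, smul_lie, lie_smul, lie_self,
    h34, h31, h32, h41, h42, h01, h02, h03, h04, h12, h43, h13, h23, h14, h24,
    h10, h20, h30, h40, h21, smul_zero, zero_add, add_zero, smul_neg, smul_smul]
  module

/-- Coordinates of a bracket. -/
lemma aux_repr_bracket (x y : L) :
    b.repr ⁅x, y⁆ 0 = b.repr x 3 * b.repr y 1 - b.repr x 1 * b.repr y 3 ∧
    b.repr ⁅x, y⁆ 1 = 2 * b.repr x 3 * b.repr y 2 - 2 * b.repr x 2 * b.repr y 3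
        + b.repr x 4 * b.repr y 1 - b.repr x 1 * b.repr y 4 ∧
    b.repr ⁅x, y⁆ 2 = 2 * (b.repr x 4 * b.repr y 2) - 2 * (b.repr x 2 * b.repr y 4) ∧
    b.repr ⁅x, y⁆ 3 = b.repr x 3 * b.repr y 4 - b.repr x 4 * b.repr y 3 ∧
    b.repr ⁅x, y⁆ 4 = 0 := by
  refine ⟨?_, ?_, ?_, ?_, ?_⟩ <;>
    rw [aux_bracket_eq b h34 h31 h32 h41 h42 h01 h02 h03 h04 h12 x y] <;>
    simp [Module.Basis.repr_self, Finsupp.single_apply]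

/-- `b 0` is central. -/
lemma aux_central (w : L) : ⁅b 0, w⁆ = 0 := by
  rw [aux_bracket_eq b h34 h31 h32 h41 h42 h01 h02 h03 h04 h12 (b 0) w]
  simp [Module.Basis.repr_self, Finsupp.single_apply]

/-- The key coordinate vanishing facts for an automorphism. -/
lemma aux_key (A : L ≃ₗ⁅ℝ⁆ L) :
    (b.repr (A (b 0)) 1 = 0 ∧ b.repr (A (b 0)) 2 = 0 ∧ b.repr (A (b 0)) 3 = 0 ∧
      b.repr (A (b 0)) 4 = 0) ∧
    (b.repr (A (b 1)) 2 = 0 ∧ b.repr (A (b 1)) 3 = 0 ∧ b.repr (A (b 1)) 4 = 0) ∧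
    (b.repr (A (b 2)) 3 = 0 ∧ b.repr (A (b 2)) 4 = 0) ∧
    b.repr (A (b 3)) 4 = 0 := by
  have KB := aux_repr_bracket b h34 h31 h32 h41 h42 h01 h02 h03 h04 h12
  have hzero : A (0 : L) = 0 := by
    rw [← A.coe_toLinearEquiv]; exact map_zero _
  have hsmul : ∀ (a : ℝ) (u : L), A (a • u) = a • A u := fun a u => by
    rw [← A.coe_toLinearEquiv]; exact map_smul _ a u
  have hcent : ∀ w : L, ⁅A (b 0), w⁆ = 0 := by
    intro w
    have h1 : ⁅A (b 0), A (A.symm w)⁆ = 0 := by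
      rw [← LieEquiv.map_lie, aux_central b h34 h31 h32 h41 h42 h01 h02 h03 h04 h12, hzero]
    rwa [A.apply_symm_apply] at h1
  have e4 := hcent (b 4)
  have e3 := hcent (b 3)
  -- coordinates of A (b 0)
  have c01 : b.repr (A (b 0)) 1 = 0 := by
    have h := (KB (A (b 0)) (b 4)).2.1
    rw [e4] at h
    simp [Module.Basis.repr_self, Finsupp.single_apply] at h
    linarith
  have c02 : b.repr (A (b 0)) 2 = 0 := by
    have h := (KB (A (b 0)) (b 4)).2.2.1
    rw [e4] at h
    simp [Module.Basis.repr_self, Finsupp.single_apply] at h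
    linarith
  have c03 : b.repr (A (b 0)) 3 = 0 := by
    have h := (KB (A (b 0)) (b 4)).2.2.2.1
    rw [e4] at h
    simp [Module.Basis.repr_self, Finsupp.single_apply] at h
    linarith
  have c04 : b.repr (A (b 0)) 4 = 0 := by
    have h := (KB (A (b 0)) (b 3)).2.2.2.1
    rw [e3] at h
    simp [Module.Basis.repr_self, Finsupp.single_apply] at h
    linarith
  -- A (b 3) ∈ D
  have c34 : b.repr (A (b 3)) 4 = 0 := by
    have h3 : A (b 3) = ⁅A (b 3), A (b 4)⁆ := by rw [← LieEquiv.map_lie, h34]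
    rw [h3]
    exact (KB _ _).2.2.2.2
  -- A (b 1) ∈ D
  have c14 : b.repr (A (b 1)) 4 = 0 := by
    have h1 : A (b 1) = ⁅A (b 4), A (b 1)⁆ := by rw [← LieEquiv.map_lie, h41]
    rw [h1]
    exact (KB _ _).2.2.2.2
  -- A (b 2) ∈ D
  have hA2 : (2 : ℝ) • A (b 2) = ⁅A (b 4), A (b 2)⁆ := by
    rw [← LieEquiv.map_lie, h42, hsmul]
  have c24 : b.repr (A (b 2)) 4 = 0 := by
    have h := (KB (A (b 4)) (A (b 2))).2.2.2.2
    rw [← hA2] at h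
    simp [Finsupp.smul_apply, smul_eq_mul] at h
    linarith
  -- A (b 1) ∈ span {b0, b1}
  have hA1 : (2 : ℝ) • A (b 1) = ⁅A (b 3), A (b 2)⁆ := by
    rw [← LieEquiv.map_lie, h32, hsmul]
  have c12 : b.repr (A (b 1)) 2 = 0 := by
    have h := (KB (A (b 3)) (A (b 2))).2.2.1
    rw [← hA1] at h
    simp [Finsupp.smul_apply, smul_eq_mul, c34, c24] at h
    linarith
  have c13 : b.repr (A (b 1)) 3 = 0 := by
    have h := (KB (A (b 3)) (A (b 2))).2.2.2.1
    rw [← hA1] at h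
    simp [Finsupp.smul_apply, smul_eq_mul, c34, c24] at h
    linarith
  -- the coefficient of A (b 1) along b 1 is nonzero
  have c11 : b.repr (A (b 1)) 1 ≠ 0 := by
    intro hc
    have hmem : A (b 1) ∈ Submodule.span ℝ ({b 0} : Set L) :=
      aux_mem_span0' b hc c12 c13 c14
    obtain ⟨r, hr⟩ := Submodule.mem_span_singleton.mp hmem
    have hb1 : ⁅b 1, b 4⁆ = 0 := by
      have hz : ⁅A (b 1), A (b 4)⁆ = 0 := by
        rw [← hr, smul_lie, aux_central b h34 h31 h32 h41 h42 h01 h02 h03 h04 h12, smul_zero]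
      have h2 : A ⁅b 1, b 4⁆ = 0 := by rw [LieEquiv.map_lie]; exact hz
      have h3 := congrArg A.symm h2
      rwa [A.symm_apply_apply, ← A.symm.coe_toLinearEquiv, map_zero] at h3
    rw [← lie_skew, h41, neg_eq_zero] at hb1
    exact b.ne_zero 1 hb1
  -- A (b 2): coordinate 3 vanishes
  have c23 : b.repr (A (b 2)) 3 = 0 := by
    have hz : ⁅A (b 2), A (b 1)⁆ = 0 := by
      rw [← LieEquiv.map_lie]
      have h21 : ⁅b 2, b 1⁆ = 0 := by rw [← lie_skew, h12, neg_zero]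
      rw [h21, hzero]
    have h := (KB (A (b 2)) (A (b 1))).1
    rw [hz] at h
    simp [c13] at h
    rcases h with h | h
    · exact h
    · exact absurd h c11
  exact ⟨⟨c01, c02, c03, c04⟩, ⟨c12, c13, c14⟩, ⟨c23, c24⟩, c34⟩

/-- Invariance of the four subspaces. -/
lemma aux_inv (A : L ≃ₗ⁅ℝ⁆ L) :
    (∀ x ∈ Submodule.span ℝ ({b 0} : Set L), A x ∈ Submodule.span ℝ ({b 0} : Set L)) ∧
    (∀ x ∈ Submodule.span ℝ ({b 0, b 1} : Set L),
        A x ∈ Submodule.span ℝ ({b 0, b 1} : Set L)) ∧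
    (∀ x ∈ Submodule.span ℝ ({b 0, b 1, b 2} : Set L),
        A x ∈ Submodule.span ℝ ({b 0, b 1, b 2} : Set L)) ∧
    (∀ x ∈ Submodule.span ℝ ({b 0, b 1, b 2, b 3} : Set L),
        A x ∈ Submodule.span ℝ ({b 0, b 1, b 2, b 3} : Set L)) := by
  obtain ⟨⟨c01, c02, c03, c04⟩, ⟨c12, c13, c14⟩, ⟨c23, c24⟩, c34⟩ :=
    aux_key b h34 h31 h32 h41 h42 h01 h02 h03 h04 h12 A
  have hadd : ∀ u v : L, A (u + v) = A u + A v := fun u v => by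
    rw [← A.coe_toLinearEquiv]; exact map_add _ u v
  have hzero : A (0 : L) = 0 := by
    rw [← A.coe_toLinearEquiv]; exact map_zero _
  have hsmul : ∀ (a : ℝ) (u : L), A (a • u) = a • A u := fun a u => by
    rw [← A.coe_toLinearEquiv]; exact map_smul _ a u
  refine ⟨?_, ?_, ?_, ?_⟩
  · intro x hx
    induction hx using Submodule.span_induction with
    | mem y hy =>
      simp only [Set.mem_singleton_iff] at hy
      subst hy
      exact aux_mem_span0' b c01 c02 c03 c04
    | zero => rw [hzero]; exact Submodule.zero_mem _
    | add u v _ _ hu hv => rw [hadd]; exact Submodule.add_mem _ hu hv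
    | smul a u _ hu => rw [hsmul]; exact Submodule.smul_mem _ _ hu
  · intro x hx
    induction hx using Submodule.span_induction with
    | mem y hy =>
      simp only [Set.mem_insert_iff, Set.mem_singleton_iff] at hy
      rcases hy with rfl | rfl
      · exact aux_mem_span1' b c02 c03 c04
      · exact aux_mem_span1' b c12 c13 c14
    | zero => rw [hzero]; exact Submodule.zero_mem _
    | add u v _ _ hu hv => rw [hadd]; exact Submodule.add_mem _ hu hv
    | smul a u _ hu => rw [hsmul]; exact Submodule.smul_mem _ _ hu
  · intro x hx
    induction hx using Submodule.span_induction with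
    | mem y hy =>
      simp only [Set.mem_insert_iff, Set.mem_singleton_iff] at hy
      rcases hy with rfl | rfl | rfl
      · exact aux_mem_span2' b c03 c04
      · exact aux_mem_span2' b c13 c14
      · exact aux_mem_span2' b c23 c24
    | zero => rw [hzero]; exact Submodule.zero_mem _
    | add u v _ _ hu hv => rw [hadd]; exact Submodule.add_mem _ hu hv
    | smul a u _ hu => rw [hsmul]; exact Submodule.smul_mem _ _ hu
  · intro x hx
    induction hx using Submodule.span_induction with
    | mem y hy =>
      simp only [Set.mem_insert_iff, Set.mem_singleton_iff] at hy
      rcases hy with rfl | rfl | rfl | rfl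
      · exact aux_mem_span3' b c04
      · exact aux_mem_span3' b c14
      · exact aux_mem_span3' b c24
      · exact aux_mem_span3' b c34
    | zero => rw [hzero]; exact Submodule.zero_mem _
    | add u v _ _ hu hv => rw [hadd]; exact Submodule.add_mem _ hu hv
    | smul a u _ hu => rw [hsmul]; exact Submodule.smul_mem _ _ hu

end Aux

/-- Let `L` be the five-dimensional real Lie algebra with basis `b₀, …, b₄` and nonzero
commutation relations `[b₃,b₄] = b₃`, `[b₃,b₁] = b₀`, `[b₃,b₂] = 2b₁`, `[b₄,b₁] = b₁`,
`[b₄,b₂] = 2b₂` (all other brackets of basis elements vanish).  Then every Lie algebra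
automorphism `A` of `L` preserves each of the subspaces `⟨b₀⟩`, `⟨b₀,b₁⟩`, `⟨b₀,b₁,b₂⟩` and
`⟨b₀,b₁,b₂,b₃⟩`; consequently, the matrix of `A` in the basis `(b₀,…,b₄)` is upper
triangular with nonzero diagonal entries. -/
theorem automorphism_upper_triangular {L : Type*} [LieRing L] [LieAlgebra ℝ L]
    (b : Module.Basis (Fin 5) ℝ L)
    (h34 : ⁅b 3, b 4⁆ = b 3) (h31 : ⁅b 3, b 1⁆ = b 0) (h32 : ⁅b 3, b 2⁆ = (2 : ℝ) • b 1)
    (h41 : ⁅b 4, b 1⁆ = b 1) (h42 : ⁅b 4, b 2⁆ = (2 : ℝ) • b 2)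
    (h01 : ⁅b 0, b 1⁆ = 0) (h02 : ⁅b 0, b 2⁆ = 0) (h03 : ⁅b 0, b 3⁆ = 0)
    (h04 : ⁅b 0, b 4⁆ = 0) (h12 : ⁅b 1, b 2⁆ = 0) :
    ∀ A : L ≃ₗ⁅ℝ⁆ L,
      ((∀ x ∈ Submodule.span ℝ ({b 0} : Set L), A x ∈ Submodule.span ℝ ({b 0} : Set L)) ∧
       (∀ x ∈ Submodule.span ℝ ({b 0, b 1} : Set L),
          A x ∈ Submodule.span ℝ ({b 0, b 1} : Set L)) ∧
       (∀ x ∈ Submodule.span ℝ ({b 0, b 1, b 2} : Set L),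
          A x ∈ Submodule.span ℝ ({b 0, b 1, b 2} : Set L)) ∧
       (∀ x ∈ Submodule.span ℝ ({b 0, b 1, b 2, b 3} : Set L),
          A x ∈ Submodule.span ℝ ({b 0, b 1, b 2, b 3} : Set L))) ∧
      (∀ i j : Fin 5, j < i → b.repr (A (b j)) i = 0) ∧
      (∀ i : Fin 5, b.repr (A (b i)) i ≠ 0) := by
  intro A
  obtain ⟨⟨c01, c02, c03, c04⟩, ⟨c12, c13, c14⟩, ⟨c23, c24⟩, c34⟩ :=
    aux_key b h34 h31 h32 h41 h42 h01 h02 h03 h04 h12 A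
  have hinv := aux_inv b h34 h31 h32 h41 h42 h01 h02 h03 h04 h12 A
  have hinvS := aux_inv b h34 h31 h32 h41 h42 h01 h02 h03 h04 h12 A.symm
  refine ⟨hinv, ?_, ?_⟩
  · intro i j hij
    fin_cases j <;> fin_cases i <;>
      first
        | exact absurd hij (by decide)
        | exact c01 | exact c02 | exact c03 | exact c04
        | exact c12 | exact c13 | exact c14
        | exact c23 | exact c24
        | exact c34
  · intro i
    fin_cases i
    · -- diagonal entry 0
      intro h0
      have hz : A (b 0) = 0 := by
        have : b.repr (A (b 0)) = 0 := by
          ext j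
          fin_cases j
          · exact h0
          · exact c01
          · exact c02
          · exact c03
          · exact c04
        exact b.repr.map_eq_zero_iff.mp this
      have : b 0 = 0 := by
        have hzS : A.symm (0 : L) = 0 := by
          rw [← A.symm.coe_toLinearEquiv]; exact map_zero _
        have h5 := congrArg A.symm hz
        rwa [A.symm_apply_apply, hzS] at h5
      exact b.ne_zero 0 this
    · intro h1
      have hmem : A (b 1) ∈ Submodule.span ℝ ({b 0} : Set L) :=
        aux_mem_span0' b h1 c12 c13 c14
      have : b 1 ∈ Submodule.span ℝ ({b 0} : Set L) := by
        have := hinvS.1 _ hmem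
        rwa [A.symm_apply_apply] at this
      have := (aux_mem_span0 b this).1
      simp [Module.Basis.repr_self] at this
    · intro h2
      have hmem : A (b 2) ∈ Submodule.span ℝ ({b 0, b 1} : Set L) :=
        aux_mem_span1' b h2 c23 c24
      have : b 2 ∈ Submodule.span ℝ ({b 0, b 1} : Set L) := by
        have := hinvS.2.1 _ hmem
        rwa [A.symm_apply_apply] at this
      have := (aux_mem_span1 b this).1
      simp [Module.Basis.repr_self] at this
    · intro h3
      have hmem : A (b 3) ∈ Submodule.span ℝ ({b 0, b 1, b 2} : Set L) :=
        aux_mem_span2' b h3 c34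
      have : b 3 ∈ Submodule.span ℝ ({b 0, b 1, b 2} : Set L) := by
        have := hinvS.2.2.1 _ hmem
        rwa [A.symm_apply_apply] at this
      have := (aux_mem_span2 b this).1
      simp [Module.Basis.repr_self] at this
    · intro h4
      have hmem : A (b 4) ∈ Submodule.span ℝ ({b 0, b 1, b 2, b 3} : Set L) :=
        aux_mem_span3' b h4
      have : b 4 ∈ Submodule.span ℝ ({b 0, b 1, b 2, b 3} : Set L) := by
        have := hinvS.2.2.2 _ hmem
        rwa [A.symm_apply_apply] at this
      have := aux_mem_span3 b this
      simp [Module.Basis.repr_self] at this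
end

section
/- Let L be a Lie algebra over ℝ with a basis b₀, b₁, b₂, b₃, b₄ (as an ℝ-vector space) whose Lie brackets are determined by [b₃, b₄] = b₃, [b₃, b₁] = b₀, [b₃, b₂] = 2·b₁, [b₄, b₁] = b₁, [b₄, b₂] = 2·b₂, and all other brackets of basis elements equal to zero (in particular b₀ is central and [b₁, b₂] = 0). Then for every Lie algebra automorphism A of L one has A(b₄) − b₄ ∈ span{b₀, b₁, b₂, b₃}; i.e., the coefficient of b₄ in A(b₄) equals 1. -/
/-- Let `L` be the five-dimensional real Lie algebra with basis `b₀, …, b₄` and nonzero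
commutation relations `[b₃,b₄] = b₃`, `[b₃,b₁] = b₀`, `[b₃,b₂] = 2b₁`, `[b₄,b₁] = b₁`,
`[b₄,b₂] = 2b₂` (all other brackets of basis elements vanish).  Then for every Lie algebra
automorphism `A` of `L` one has `A(b₄) − b₄ ∈ span{b₀, b₁, b₂, b₃}`, i.e. the coefficient
of `b₄` in `A(b₄)` equals `1`. -/
theorem automorphism_fixes_b4_coefficient {L : Type*} [LieRing L] [LieAlgebra ℝ L]
    (b : Module.Basis (Fin 5) ℝ L)
    (h34 : ⁅b 3, b 4⁆ = b 3) (h31 : ⁅b 3, b 1⁆ = b 0) (h32 : ⁅b 3, b 2⁆ = (2 : ℝ) • b 1)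
    (h41 : ⁅b 4, b 1⁆ = b 1) (h42 : ⁅b 4, b 2⁆ = (2 : ℝ) • b 2)
    (h01 : ⁅b 0, b 1⁆ = 0) (h02 : ⁅b 0, b 2⁆ = 0) (h03 : ⁅b 0, b 3⁆ = 0)
    (h04 : ⁅b 0, b 4⁆ = 0) (h12 : ⁅b 1, b 2⁆ = 0) :
    ∀ A : L ≃ₗ⁅ℝ⁆ L,
      A (b 4) - b 4 ∈ Submodule.span ℝ ({b 0, b 1, b 2, b 3} : Set L) := by
  intro A
  have h10 : ⁅b 1, b 0⁆ = 0 := by rw [← lie_skew, h01, neg_zero]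
  have h20 : ⁅b 2, b 0⁆ = 0 := by rw [← lie_skew, h02, neg_zero]
  have h30 : ⁅b 3, b 0⁆ = 0 := by rw [← lie_skew, h03, neg_zero]
  have h40 : ⁅b 4, b 0⁆ = 0 := by rw [← lie_skew, h04, neg_zero]
  have h21 : ⁅b 2, b 1⁆ = 0 := by rw [← lie_skew, h12, neg_zero]
  have h13 : ⁅b 1, b 3⁆ = -b 0 := by rw [← lie_skew, h31]
  have h23 : ⁅b 2, b 3⁆ = -((2:ℝ) • b 1) := by rw [← lie_skew, h32]
  have h14 : ⁅b 1, b 4⁆ = -b 1 := by rw [← lie_skew, h41]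
  have h24 : ⁅b 2, b 4⁆ = -((2:ℝ) • b 2) := by rw [← lie_skew, h42]
  have h43 : ⁅b 4, b 3⁆ = -b 3 := by rw [← lie_skew, h34]
  have expand : ∀ x : L, x = b.repr x 0 • b 0 + b.repr x 1 • b 1 + b.repr x 2 • b 2
      + b.repr x 3 • b 3 + b.repr x 4 • b 4 := by
    intro x
    have h := b.sum_repr x
    rw [Fin.sum_univ_five] at h
    exact h.symm
  have key : ∀ x y : L, ⁅x, y⁆ =
      (b.repr x 3 * b.repr y 1 - b.repr x 1 * b.repr y 3) • b 0 +
      (b.repr x 4 * b.repr y 1 - b.repr x 1 * b.repr y 4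
        + 2 * (b.repr x 3 * b.repr y 2) - 2 * (b.repr x 2 * b.repr y 3)) • b 1 +
      (2 * (b.repr x 4 * b.repr y 2) - 2 * (b.repr x 2 * b.repr y 4)) • b 2 +
      (b.repr x 3 * b.repr y 4 - b.repr x 4 * b.repr y 3) • b 3 + (0:ℝ) • b 4 := by
    intro x y
    conv_lhs => rw [expand x, expand y]
    simp only [add_lie, lie_add, smul_lie, lie_smul, lie_self, h01, h02, h03, h04, h10, h20,
      h30, h40, h12, h21, h31, h13, h32, h23, h41, h14, h42, h24, h34, h43,
      smul_zero, zero_add, add_zero, smul_neg, smul_smul]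
    module
  have coeff0 : ∀ (c0 c1 c2 c3 c4 : ℝ),
      b.repr (c0 • b 0 + c1 • b 1 + c2 • b 2 + c3 • b 3 + c4 • b 4) 0 = c0 := by
    intros; simp [Finsupp.single_apply]
  have coeff1 : ∀ (c0 c1 c2 c3 c4 : ℝ),
      b.repr (c0 • b 0 + c1 • b 1 + c2 • b 2 + c3 • b 3 + c4 • b 4) 1 = c1 := by
    intros; simp [Finsupp.single_apply]
  have coeff2 : ∀ (c0 c1 c2 c3 c4 : ℝ),
      b.repr (c0 • b 0 + c1 • b 1 + c2 • b 2 + c3 • b 3 + c4 • b 4) 2 = c2 := by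
    intros; simp [Finsupp.single_apply]
  have coeff3 : ∀ (c0 c1 c2 c3 c4 : ℝ),
      b.repr (c0 • b 0 + c1 • b 1 + c2 • b 2 + c3 • b 3 + c4 • b 4) 3 = c3 := by
    intros; simp [Finsupp.single_apply]
  have coeff4 : ∀ (c0 c1 c2 c3 c4 : ℝ),
      b.repr (c0 • b 0 + c1 • b 1 + c2 • b 2 + c3 • b 3 + c4 • b 4) 4 = c4 := by
    intros; simp [Finsupp.single_apply]
  have comp0 : ∀ x y : L, b.repr ⁅x, y⁆ 0 =
      b.repr x 3 * b.repr y 1 - b.repr x 1 * b.repr y 3 := by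
    intro x y; rw [key x y]; exact coeff0 _ _ _ _ _
  have comp1 : ∀ x y : L, b.repr ⁅x, y⁆ 1 =
      b.repr x 4 * b.repr y 1 - b.repr x 1 * b.repr y 4
        + 2 * (b.repr x 3 * b.repr y 2) - 2 * (b.repr x 2 * b.repr y 3) := by
    intro x y; rw [key x y]; exact coeff1 _ _ _ _ _
  have comp2 : ∀ x y : L, b.repr ⁅x, y⁆ 2 =
      2 * (b.repr x 4 * b.repr y 2) - 2 * (b.repr x 2 * b.repr y 4) := by
    intro x y; rw [key x y]; exact coeff2 _ _ _ _ _
  have comp3 : ∀ x y : L, b.repr ⁅x, y⁆ 3 =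
      b.repr x 3 * b.repr y 4 - b.repr x 4 * b.repr y 3 := by
    intro x y; rw [key x y]; exact coeff3 _ _ _ _ _
  have comp4 : ∀ x y : L, b.repr ⁅x, y⁆ 4 = 0 := by
    intro x y; rw [key x y]; exact coeff4 _ _ _ _ _
  have H2 : ⁅A (b 4), A (b 2)⁆ = (2:ℝ) • A (b 2) := by
    rw [← A.map_lie, h42]; exact A.toLinearEquiv.map_smul 2 (b 2)
  have H3 : ⁅A (b 3), A (b 4)⁆ = A (b 3) := by rw [← A.map_lie, h34]
  by_cases hu : b.repr (A (b 4)) 4 = 1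
  · have hmem : A (b 4) - b 4 = b.repr (A (b 4)) 0 • b 0 + b.repr (A (b 4)) 1 • b 1
        + b.repr (A (b 4)) 2 • b 2 + b.repr (A (b 4)) 3 • b 3 := by
      conv_lhs => rw [expand (A (b 4))]
      rw [hu, one_smul]
      abel
    rw [hmem]
    refine Submodule.add_mem _ (Submodule.add_mem _ (Submodule.add_mem _ ?_ ?_) ?_) ?_ <;>
      exact Submodule.smul_mem _ _ (Submodule.subset_span (by simp))
  · exfalso
    have hu' : b.repr (A (b 4)) 4 - 1 ≠ 0 := sub_ne_zero.mpr hu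
    have w4 : b.repr (A (b 3)) 4 = 0 := by
      have e := comp4 (A (b 3)) (A (b 4)); rwa [H3] at e
    have w3 : b.repr (A (b 3)) 3 = 0 := by
      have e := comp3 (A (b 3)) (A (b 4))
      rw [H3, w4] at e
      have h : b.repr (A (b 3)) 3 * (b.repr (A (b 4)) 4 - 1) = 0 := by linear_combination -e
      exact (mul_eq_zero.mp h).resolve_right hu'
    by_cases hc : 2 * b.repr (A (b 4)) 4 + 1 = 0 ∨ b.repr (A (b 4)) 4 + 1 = 0
    · -- A (b 2) = 0, contradiction
      have ha2 : b.repr (A (b 4)) 4 + 2 ≠ 0 := by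
        rcases hc with h | h <;> intro h' <;> linarith
      have haz : b.repr (A (b 4)) 4 - 2 ≠ 0 := by
        rcases hc with h | h <;> intro h' <;> linarith
      have z4 : b.repr (A (b 2)) 4 = 0 := by
        have e := comp4 (A (b 4)) (A (b 2))
        rw [H2, map_smul, Finsupp.smul_apply, smul_eq_mul] at e
        linarith
      have z3 : b.repr (A (b 2)) 3 = 0 := by
        have e := comp3 (A (b 4)) (A (b 2))
        rw [H2, map_smul, Finsupp.smul_apply, smul_eq_mul, z4] at e
        have h : b.repr (A (b 2)) 3 * (b.repr (A (b 4)) 4 + 2) = 0 := by linear_combination e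
        exact (mul_eq_zero.mp h).resolve_right ha2
      have z2 : b.repr (A (b 2)) 2 = 0 := by
        have e := comp2 (A (b 4)) (A (b 2))
        rw [H2, map_smul, Finsupp.smul_apply, smul_eq_mul, z4] at e
        have h : b.repr (A (b 2)) 2 * (b.repr (A (b 4)) 4 - 1) = 0 := by
          linear_combination -e / 2
        exact (mul_eq_zero.mp h).resolve_right hu'
      have z1 : b.repr (A (b 2)) 1 = 0 := by
        have e := comp1 (A (b 4)) (A (b 2))
        rw [H2, map_smul, Finsupp.smul_apply, smul_eq_mul, z4, z3, z2] at e
        have h : b.repr (A (b 2)) 1 * (b.repr (A (b 4)) 4 - 2) = 0 := by linear_combination -e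
        exact (mul_eq_zero.mp h).resolve_right haz
      have z0 : b.repr (A (b 2)) 0 = 0 := by
        have e := comp0 (A (b 4)) (A (b 2))
        rw [H2, map_smul, Finsupp.smul_apply, smul_eq_mul, z1, z3] at e
        linear_combination e / 2
      have hz : A (b 2) = 0 := by
        rw [expand (A (b 2)), z0, z1, z2, z3, z4]
        simp
      have hb2 : b 2 = (0 : L) := by
        have h2 := congrArg A.symm hz
        have hz0 : A.symm (0 : L) = 0 := A.symm.toLinearEquiv.map_zero
        rwa [A.symm_apply_apply, hz0] at h2
      exact b.ne_zero 2 hb2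
    · push_neg at hc
      obtain ⟨hc1, hc2⟩ := hc
      have w2 : b.repr (A (b 3)) 2 = 0 := by
        have e := comp2 (A (b 3)) (A (b 4))
        rw [H3, w4] at e
        have h : b.repr (A (b 3)) 2 * (2 * b.repr (A (b 4)) 4 + 1) = 0 := by
          linear_combination e
        exact (mul_eq_zero.mp h).resolve_right hc1
      have w1 : b.repr (A (b 3)) 1 = 0 := by
        have e := comp1 (A (b 3)) (A (b 4))
        rw [H3, w4, w3, w2] at e
        have h : b.repr (A (b 3)) 1 * (b.repr (A (b 4)) 4 + 1) = 0 := by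
          linear_combination e
        exact (mul_eq_zero.mp h).resolve_right hc2
      have w0 : b.repr (A (b 3)) 0 = 0 := by
        have e := comp0 (A (b 3)) (A (b 4))
        rw [H3, w3, w1] at e
        linear_combination e
      have hw : A (b 3) = 0 := by
        rw [expand (A (b 3)), w0, w1, w2, w3, w4]
        simp
      have hb3 : b 3 = (0 : L) := by
        have h2 := congrArg A.symm hw
        have hz0 : A.symm (0 : L) = 0 := A.symm.toLinearEquiv.map_zero
        rwa [A.symm_apply_apply, hz0] at h2
      exact b.ne_zero 3 hb3
end

section
/- Let L be a Lie algebra over ℝ with a basis b₀, b₁, b₂, b₃, b₄ (as an ℝ-vector space) whose Lie brackets are determined by [b₃, b₄] = b₃, [b₃, b₁] = b₀, [b₃, b₂] = 2·b₁, [b₄, b₁] = b₁, [b₄, b₂] = 2·b₂, and all other brackets of basis elements equal to zero (in particular b₀ is central and [b₁, b₂] = 0). Then the three-dimensional subspace span{b₀, b₁, b₃} is invariant under every Lie algebra automorphism A of L, i.e., A(span{b₀, b₁, b₃}) ⊆ span{b₀, b₁, b₃}; in other words, span{b₀, b₁, b₃} is a megaideal of L. -/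
private lemma span4aux {V : Type*} [AddCommGroup V] [Module ℝ V] {x a c d e : V}
    (h : x ∈ Submodule.span ℝ ({a, c, d, e} : Set V)) :
    ∃ p q r s : ℝ, x = p • a + q • c + r • d + s • e := by
  rw [Submodule.mem_span_insert] at h
  obtain ⟨p, z, hz, rfl⟩ := h
  rw [Submodule.mem_span_insert] at hz
  obtain ⟨q, z2, hz2, rfl⟩ := hz
  rw [Submodule.mem_span_insert] at hz2
  obtain ⟨r, z3, hz3, rfl⟩ := hz2
  rw [Submodule.mem_span_singleton] at hz3
  obtain ⟨s, rfl⟩ := hz3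
  exact ⟨p, q, r, s, by abel⟩

/-- Let `L` be the five-dimensional real Lie algebra with basis `b₀, …, b₄` and nonzero
commutation relations `[b₃,b₄] = b₃`, `[b₃,b₁] = b₀`, `[b₃,b₂] = 2b₁`, `[b₄,b₁] = b₁`,
`[b₄,b₂] = 2b₂` (all other brackets of basis elements vanish).  Then the subspace
`span{b₀, b₁, b₃}` is invariant under every Lie algebra automorphism `A` of `L`,
i.e. it is a megaideal of `L`. -/
theorem span_b0_b1_b3_isMegaideal {L : Type*} [LieRing L] [LieAlgebra ℝ L]
    (b : Module.Basis (Fin 5) ℝ L)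
    (h34 : ⁅b 3, b 4⁆ = b 3) (h31 : ⁅b 3, b 1⁆ = b 0) (h32 : ⁅b 3, b 2⁆ = (2 : ℝ) • b 1)
    (h41 : ⁅b 4, b 1⁆ = b 1) (h42 : ⁅b 4, b 2⁆ = (2 : ℝ) • b 2)
    (h01 : ⁅b 0, b 1⁆ = 0) (h02 : ⁅b 0, b 2⁆ = 0) (h03 : ⁅b 0, b 3⁆ = 0)
    (h04 : ⁅b 0, b 4⁆ = 0) (h12 : ⁅b 1, b 2⁆ = 0) :
    ∀ A : L ≃ₗ⁅ℝ⁆ L, ∀ x ∈ Submodule.span ℝ ({b 0, b 1, b 3} : Set L),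
      A x ∈ Submodule.span ℝ ({b 0, b 1, b 3} : Set L) := by
  intro A
  have k43 : ⁅b 4, b 3⁆ = -(b 3) := by rw [← lie_skew, h34]
  have k13 : ⁅b 1, b 3⁆ = -(b 0) := by rw [← lie_skew, h31]
  have k23 : ⁅b 2, b 3⁆ = -((2:ℝ) • b 1) := by rw [← lie_skew, h32]
  have k14 : ⁅b 1, b 4⁆ = -(b 1) := by rw [← lie_skew, h41]
  have k24 : ⁅b 2, b 4⁆ = -((2:ℝ) • b 2) := by rw [← lie_skew, h42]
  have k10 : ⁅b 1, b 0⁆ = 0 := by rw [← lie_skew, h01, neg_zero]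
  have k20 : ⁅b 2, b 0⁆ = 0 := by rw [← lie_skew, h02, neg_zero]
  have k30 : ⁅b 3, b 0⁆ = 0 := by rw [← lie_skew, h03, neg_zero]
  have k40 : ⁅b 4, b 0⁆ = 0 := by rw [← lie_skew, h04, neg_zero]
  have k21 : ⁅b 2, b 1⁆ = 0 := by rw [← lie_skew, h12, neg_zero]
  set S' : Submodule ℝ L := Submodule.span ℝ ({b 0, b 1, b 2, b 3} : Set L) with hS'def
  have m0 : b 0 ∈ S' := Submodule.subset_span (by simp)
  have m1 : b 1 ∈ S' := Submodule.subset_span (by simp)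
  have m2 : b 2 ∈ S' := Submodule.subset_span (by simp)
  have m3 : b 3 ∈ S' := Submodule.subset_span (by simp)
  have hbb : ∀ i j : Fin 5, ⁅b i, b j⁆ ∈ S' := by
    have hcases : ∀ i : Fin 5, i = 0 ∨ i = 1 ∨ i = 2 ∨ i = 3 ∨ i = 4 := by decide
    intro i j
    rcases hcases i with rfl|rfl|rfl|rfl|rfl <;> rcases hcases j with rfl|rfl|rfl|rfl|rfl <;>
      simp only [Fin.isValue, h34, h31, h32, h41, h42, h01, h02, h03, h04, h12,
        k43, k13, k23, k14, k24, k10, k20, k30, k40, k21, lie_self] <;>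
      first
        | exact Submodule.zero_mem _
        | exact m0 | exact m1 | exact m2 | exact m3
        | exact neg_mem m0 | exact neg_mem m1 | exact neg_mem m3
        | exact Submodule.smul_mem _ _ m1 | exact Submodule.smul_mem _ _ m2
        | exact neg_mem (Submodule.smul_mem _ _ m1)
        | exact neg_mem (Submodule.smul_mem _ _ m2)
  have sumlie : ∀ (s : Finset (Fin 5)) (f : Fin 5 → L) (v : L),
      ⁅∑ i ∈ s, f i, v⁆ = ∑ i ∈ s, ⁅f i, v⁆ := by
    intro s f v
    induction s using Finset.cons_induction with
    | empty => simp
    | cons i s hi ih => rw [Finset.sum_cons, Finset.sum_cons, add_lie, ih]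
  have liesum : ∀ (s : Finset (Fin 5)) (f : Fin 5 → L) (v : L),
      ⁅v, ∑ i ∈ s, f i⁆ = ∑ i ∈ s, ⁅v, f i⁆ := by
    intro s f v
    induction s using Finset.cons_induction with
    | empty => simp
    | cons i s hi ih => rw [Finset.sum_cons, Finset.sum_cons, lie_add, ih]
  have key : ∀ u v : L, ⁅u, v⁆ ∈ S' := by
    intro u v
    obtain ⟨f, rfl⟩ : ∃ f : Fin 5 → ℝ, u = ∑ i, f i • b i := ⟨_, (b.sum_repr u).symm⟩
    obtain ⟨g, rfl⟩ : ∃ g : Fin 5 → ℝ, v = ∑ i, g i • b i := ⟨_, (b.sum_repr v).symm⟩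
    rw [sumlie]
    refine Submodule.sum_mem _ fun i _ => ?_
    rw [smul_lie]
    refine Submodule.smul_mem _ _ ?_
    rw [liesum]
    refine Submodule.sum_mem _ fun j _ => ?_
    rw [lie_smul]
    exact Submodule.smul_mem _ _ (hbb i j)
  have mapLie : ∀ x y : L, A ⁅x, y⁆ = ⁅A x, A y⁆ := fun x y => A.toLieHom.map_lie x y
  have mapSmul : ∀ (t : ℝ) (x : L), A (t • x) = t • A x := fun t x => A.toLinearEquiv.map_smul t x
  have mapAdd : ∀ x y : L, A (x + y) = A x + A y := fun x y => A.toLinearEquiv.map_add x y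
  have hA3 : A (b 3) ∈ S' := by
    have h' : A (b 3) = ⁅A (b 3), A (b 4)⁆ := by rw [← mapLie, h34]
    rw [h']; exact key _ _
  have hA2 : A (b 2) ∈ S' := by
    have h2 : (2:ℝ) • A (b 2) = ⁅A (b 4), A (b 2)⁆ := by rw [← mapLie, h42, mapSmul]
    have h' : A (b 2) = (2:ℝ)⁻¹ • ⁅A (b 4), A (b 2)⁆ := by
      rw [← h2, smul_smul]; norm_num
    rw [h']; exact Submodule.smul_mem _ _ (key _ _)
  rw [hS'def] at hA3 hA2
  obtain ⟨p, q, r, s, h3eq⟩ := span4aux hA3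
  obtain ⟨u0, u1, u2, u3, h2eq⟩ := span4aux hA2
  -- A b1 ∈ span {b0, b1}
  have hA1span : A (b 1) ∈ Submodule.span ℝ ({b 0, b 1} : Set L) := by
    have n0 : b 0 ∈ Submodule.span ℝ ({b 0, b 1} : Set L) := Submodule.subset_span (by simp)
    have n1 : b 1 ∈ Submodule.span ℝ ({b 0, b 1} : Set L) := Submodule.subset_span (by simp)
    have e1 : (2:ℝ) • A (b 1) = ⁅A (b 3), A (b 2)⁆ := by rw [← mapLie, h32, mapSmul]
    have e2 : A (b 1) = (2:ℝ)⁻¹ • ⁅A (b 3), A (b 2)⁆ := by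
      rw [← e1, smul_smul]; norm_num
    rw [h3eq, h2eq] at e2
    simp only [lie_add, add_lie, lie_smul, smul_lie, lie_self,
      h34, h31, h32, h41, h42, h01, h02, h03, h04, h12,
      k43, k13, k23, k14, k24, k10, k20, k30, k40, k21,
      smul_zero, zero_add, add_zero, smul_neg, smul_smul] at e2
    rw [e2]
    repeat'
      first
      | exact Submodule.zero_mem _
      | exact n0
      | exact n1
      | apply Submodule.add_mem
      | apply Submodule.sub_mem
      | apply neg_mem
      | apply Submodule.smul_mem
  obtain ⟨w0, w1, hw⟩ := Submodule.mem_span_pair.mp hA1span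
  -- expansion of A b4
  have h4sum := (b.sum_repr (A (b 4)))
  rw [Fin.sum_univ_five] at h4sum
  set a0 := b.repr (A (b 4)) 0
  set a1 := b.repr (A (b 4)) 1
  set a2 := b.repr (A (b 4)) 2
  set a3 := b.repr (A (b 4)) 3
  set a4 := b.repr (A (b 4)) 4
  have h4eq : A (b 4) = a0 • b 0 + a1 • b 1 + a2 • b 2 + a3 • b 3 + a4 • b 4 := h4sum.symm
  -- main equation
  have E : ⁅A (b 3), A (b 4)⁆ = A (b 3) := by rw [← mapLie, h34]
  rw [h3eq, h4eq] at E
  simp only [lie_add, add_lie, lie_smul, smul_lie, lie_self,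
    h34, h31, h32, h41, h42, h01, h02, h03, h04, h12,
    k43, k13, k23, k14, k24, k10, k20, k30, k40, k21,
    smul_zero, zero_add, add_zero, smul_neg, smul_smul] at E
  have E3 := congrArg (fun z => b.repr z 3) E
  have E2 := congrArg (fun z => b.repr z 2) E
  simp only [map_add, map_smul, map_neg, map_sub, Module.Basis.repr_self,
    Finsupp.smul_single, smul_eq_mul, mul_one, Finsupp.single_apply,
    Finsupp.coe_add, Finsupp.coe_neg, Finsupp.coe_smul, Pi.add_apply, Pi.neg_apply,
    Pi.smul_apply, Finsupp.coe_sub, Pi.sub_apply] at E3 E2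
  simp only [show ((0:Fin 5) = 3) = False from by decide, show ((1:Fin 5) = 3) = False from by decide,
    show ((2:Fin 5) = 3) = False from by decide, show ((4:Fin 5) = 3) = False from by decide,
    show ((3:Fin 5) = 3) = True from by decide, show ((0:Fin 5) = 2) = False from by decide,
    show ((1:Fin 5) = 2) = False from by decide, show ((3:Fin 5) = 2) = False from by decide,
    show ((4:Fin 5) = 2) = False from by decide, show ((2:Fin 5) = 2) = True from by decide,
    if_true, if_false, neg_zero, add_zero, zero_add, mul_zero, zero_mul, mul_one, one_mul] at E3 E2
  -- s ≠ 0
  have hs : s ≠ 0 := by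
    intro hs0
    rw [hs0, zero_smul, add_zero] at h3eq
    have e0 : A (b 0) = ⁅A (b 3), A (b 1)⁆ := by rw [← mapLie, h31]
    rw [h3eq, ← hw] at e0
    simp only [lie_add, add_lie, lie_smul, smul_lie, lie_self,
      h01, k10, k20, k21, h02, smul_zero, zero_add, add_zero] at e0
    have A0 : A (0 : L) = 0 := A.toLinearEquiv.map_zero
    have hb0 : b 0 = 0 := A.toLinearEquiv.injective (e0.trans A0.symm)
    exact b.ne_zero 0 hb0
  have ha4 : a4 = 1 := by
    have hsa : s * a4 = s * 1 := by rw [mul_one]; linear_combination E3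
    exact mul_left_cancel₀ hs hsa
  have hr : r = 0 := by
    rw [ha4] at E2; linarith
  rw [hr, zero_smul, add_zero] at h3eq
  -- final memberships
  have M0 : b 0 ∈ Submodule.span ℝ ({b 0, b 1, b 3} : Set L) := Submodule.subset_span (by simp)
  have M1 : b 1 ∈ Submodule.span ℝ ({b 0, b 1, b 3} : Set L) := Submodule.subset_span (by simp)
  have M3 : b 3 ∈ Submodule.span ℝ ({b 0, b 1, b 3} : Set L) := Submodule.subset_span (by simp)
  have hAb3 : A (b 3) ∈ Submodule.span ℝ ({b 0, b 1, b 3} : Set L) := by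
    rw [h3eq]
    exact Submodule.add_mem _ (Submodule.add_mem _ (Submodule.smul_mem _ _ M0)
      (Submodule.smul_mem _ _ M1)) (Submodule.smul_mem _ _ M3)
  have hAb1 : A (b 1) ∈ Submodule.span ℝ ({b 0, b 1, b 3} : Set L) := by
    rw [← hw]
    exact Submodule.add_mem _ (Submodule.smul_mem _ _ M0) (Submodule.smul_mem _ _ M1)
  have hAb0 : A (b 0) ∈ Submodule.span ℝ ({b 0, b 1, b 3} : Set L) := by
    have e0 : A (b 0) = ⁅A (b 3), A (b 1)⁆ := by rw [← mapLie, h31]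
    rw [h3eq, ← hw] at e0
    simp only [lie_add, add_lie, lie_smul, smul_lie, lie_self,
      h31, h01, k10, k20, k21, k30, h02, smul_zero, zero_add, add_zero, smul_smul] at e0
    rw [e0]
    repeat'
      first
      | exact Submodule.zero_mem _
      | exact M0
      | exact M1
      | exact M3
      | apply Submodule.add_mem
      | apply Submodule.sub_mem
      | apply neg_mem
      | apply Submodule.smul_mem
  intro x hx
  refine Submodule.span_induction ?_ ?_ ?_ ?_ hx
  · intro y hy
    simp only [Set.mem_insert_iff, Set.mem_singleton_iff] at hy
    rcases hy with rfl | rfl | rfl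
    · exact hAb0
    · exact hAb1
    · exact hAb3
  · have : A 0 = 0 := A.toLinearEquiv.map_zero
    rw [this]; exact Submodule.zero_mem _
  · intro y z _ _ hy hz; rw [mapAdd]; exact Submodule.add_mem _ hy hz
  · intro t y _ hy; rw [mapSmul]; exact Submodule.smul_mem _ _ hy
end

section
/- Let φ¹, φ² : ℝ → ℝ be smooth (C^∞) functions. For a smooth function φ : ℝ → ℝ let D(φ) : ℝ⁶ → ℝ⁶ be the vector field on ℝ⁶ with coordinates z = (t, x, u, p, f, g) given by D(φ)(z) = (0, φ(x), 0, −φ'(x)·p, 2φ'(x)·f, φ''(x)·p·f). Then the Lie bracket of vector fields satisfies [D(φ¹), D(φ²)] = D(φ¹·(φ²)' − (φ¹)'·φ²), i.e., at every point z ∈ ℝ⁶ one has DW(z)·V(z) − DV(z)·W(z) = D(φ¹(φ²)' − (φ¹)'φ²)(z), where V = D(φ¹), W = D(φ²) and DV, DW denote their total (Fréchet) derivatives. -/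
/-- The vector field `D(φ)` on `ℝ⁶` with coordinates `z = (t, x, u, p, f, g)`:
`D(φ)(z) = (0, φ(x), 0, −φ'(x)p, 2φ'(x)f, φ''(x)pf)`. -/
noncomputable def Dvf (φ : ℝ → ℝ) : (Fin 6 → ℝ) → (Fin 6 → ℝ) := fun z =>
  ![0, φ (z 1), 0, -(deriv φ (z 1)) * z 3, 2 * deriv φ (z 1) * z 4,
    deriv (deriv φ) (z 1) * z 3 * z 4]

@[simp]
lemma cons_val_five' {α : Type*} {m : ℕ} (x : α) (u : Fin (m + 5) → α) :
    Matrix.vecCons x u 5 =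
      Matrix.vecHead (Matrix.vecTail (Matrix.vecTail (Matrix.vecTail (Matrix.vecTail u)))) :=
  rfl

open ContinuousLinearMap in
lemma fderiv_Dvf_apply (φ : ℝ → ℝ) (hφ : ContDiff ℝ (⊤ : ℕ∞) φ) (z v : Fin 6 → ℝ) :
    fderiv ℝ (Dvf φ) z v = ![0, deriv φ (z 1) * v 1, 0,
      -(deriv (deriv φ) (z 1) * v 1 * z 3 + deriv φ (z 1) * v 3),
      2 * (deriv (deriv φ) (z 1) * v 1 * z 4 + deriv φ (z 1) * v 4),
      deriv (deriv (deriv φ)) (z 1) * v 1 * z 3 * z 4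
        + deriv (deriv φ) (z 1) * (v 3 * z 4 + z 3 * v 4)] := by
  have hφ0 : ContDiff ℝ ((⊤ : ℕ∞) : WithTop ℕ∞) φ := hφ.of_le (by simp)
  have h1 : ContDiff ℝ ((⊤ : ℕ∞) : WithTop ℕ∞) (deriv φ) := (contDiff_infty_iff_deriv.mp hφ0).2
  have h2 : ContDiff ℝ ((⊤ : ℕ∞) : WithTop ℕ∞) (deriv (deriv φ)) :=
    (contDiff_infty_iff_deriv.mp h1).2
  have hx : HasFDerivAt (fun z : Fin 6 → ℝ => z 1) (proj (1 : Fin 6) : (Fin 6 → ℝ) →L[ℝ] ℝ) z := (ContinuousLinearMap.proj 1 : (Fin 6 → ℝ) →L[ℝ] ℝ).hasFDerivAt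
  have hx3 : HasFDerivAt (fun z : Fin 6 → ℝ => z 3) (proj (3 : Fin 6) : (Fin 6 → ℝ) →L[ℝ] ℝ) z := (ContinuousLinearMap.proj 3 : (Fin 6 → ℝ) →L[ℝ] ℝ).hasFDerivAt
  have hx4 : HasFDerivAt (fun z : Fin 6 → ℝ => z 4) (proj (4 : Fin 6) : (Fin 6 → ℝ) →L[ℝ] ℝ) z := (ContinuousLinearMap.proj 4 : (Fin 6 → ℝ) →L[ℝ] ℝ).hasFDerivAt
  have hc1 : HasFDerivAt (fun z : Fin 6 → ℝ => φ (z 1))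
      (deriv φ (z 1) • (proj (1 : Fin 6) : (Fin 6 → ℝ) →L[ℝ] ℝ)) z :=
    (((contDiff_infty_iff_deriv.mp hφ0).1 (z 1)).hasDerivAt).comp_hasFDerivAt z hx
  have hA : HasFDerivAt (fun z : Fin 6 → ℝ => deriv φ (z 1))
      (deriv (deriv φ) (z 1) • (proj (1 : Fin 6) : (Fin 6 → ℝ) →L[ℝ] ℝ)) z :=
    by have := (((contDiff_infty_iff_deriv.mp h1).1 (z 1)).hasDerivAt).comp_hasFDerivAt z hx; exact this
  have hB : HasFDerivAt (fun z : Fin 6 → ℝ => deriv (deriv φ) (z 1))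
      (deriv (deriv (deriv φ)) (z 1) • (proj (1 : Fin 6) : (Fin 6 → ℝ) →L[ℝ] ℝ)) z :=
    by have := (((contDiff_infty_iff_deriv.mp h2).1 (z 1)).hasDerivAt).comp_hasFDerivAt z hx; exact this
  set Φ' : Fin 6 → ((Fin 6 → ℝ) →L[ℝ] ℝ) :=
    ![0, deriv φ (z 1) • proj 1, 0,
      (-(deriv φ (z 1))) • proj 3 + z 3 • (-(deriv (deriv φ) (z 1) • proj 1)),
      (2 * deriv φ (z 1)) • proj 4 + z 4 • ((2:ℝ) • (deriv (deriv φ) (z 1) • proj 1)),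
      (deriv (deriv φ) (z 1) * z 3) • proj 4 +
        z 4 • ((deriv (deriv φ) (z 1)) • proj 3 + z 3 • (deriv (deriv (deriv φ)) (z 1) • proj 1))] with hΦ'
  have H : HasFDerivAt (Dvf φ) (ContinuousLinearMap.pi Φ') z := by
    rw [hasFDerivAt_pi']
    intro i
    fin_cases i <;>
      simp only [Dvf, Matrix.cons_val_zero, Matrix.cons_val_one, Matrix.head_cons,
        Matrix.cons_val_two, Matrix.tail_cons, Matrix.cons_val_three, Matrix.cons_val_four,
        Fin.isValue, proj_pi, hΦ']
    · exact hasFDerivAt_const 0 z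
    · exact hc1
    · exact hasFDerivAt_const 0 z
    · exact hA.neg.mul hx3
    · exact (hA.const_mul 2).mul hx4
    · exact (hB.mul hx3).mul hx4
  rw [H.fderiv]
  funext i
  fin_cases i <;>
    simp [hΦ', ContinuousLinearMap.pi_apply, Matrix.cons_val_succ, mul_comm] <;> ring

/-- For smooth `φ¹, φ²` one has the commutation relation
`[D(φ¹), D(φ²)] = D(φ¹(φ²)' − (φ¹)'φ²)`, where the Lie bracket of vector fields
`V, W : ℝ⁶ → ℝ⁶` is `[V, W](z) = DW(z)·V(z) − DV(z)·W(z)`. -/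
theorem lie_bracket_Dvf_Dvf (φ₁ φ₂ : ℝ → ℝ) (h₁ : ContDiff ℝ (⊤ : ℕ∞) φ₁) (h₂ : ContDiff ℝ (⊤ : ℕ∞) φ₂) :
    ∀ z : Fin 6 → ℝ,
      fderiv ℝ (Dvf φ₂) z (Dvf φ₁ z) - fderiv ℝ (Dvf φ₁) z (Dvf φ₂ z) =
        Dvf (fun x => φ₁ x * deriv φ₂ x - deriv φ₁ x * φ₂ x) z := by
  intro z
  have h₁0 : ContDiff ℝ ((⊤ : ℕ∞) : WithTop ℕ∞) φ₁ := h₁.of_le (by simp)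
  have h₂0 : ContDiff ℝ ((⊤ : ℕ∞) : WithTop ℕ∞) φ₂ := h₂.of_le (by simp)
  have d₁ : Differentiable ℝ φ₁ := (contDiff_infty_iff_deriv.mp h₁0).1
  have d₂ : Differentiable ℝ φ₂ := (contDiff_infty_iff_deriv.mp h₂0).1
  have h₁' : ContDiff ℝ ((⊤ : ℕ∞) : WithTop ℕ∞) (deriv φ₁) := (contDiff_infty_iff_deriv.mp h₁0).2
  have h₂' : ContDiff ℝ ((⊤ : ℕ∞) : WithTop ℕ∞) (deriv φ₂) := (contDiff_infty_iff_deriv.mp h₂0).2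
  have d₁' : Differentiable ℝ (deriv φ₁) := (contDiff_infty_iff_deriv.mp h₁').1
  have d₂' : Differentiable ℝ (deriv φ₂) := (contDiff_infty_iff_deriv.mp h₂').1
  have d₁'' : Differentiable ℝ (deriv (deriv φ₁)) := (contDiff_infty_iff_deriv.mp h₁').2.differentiable (by simp)
  have d₂'' : Differentiable ℝ (deriv (deriv φ₂)) := (contDiff_infty_iff_deriv.mp h₂').2.differentiable (by simp)
  have e1 : deriv (fun x => φ₁ x * deriv φ₂ x - deriv φ₁ x * φ₂ x) =
      fun x => φ₁ x * deriv (deriv φ₂) x - deriv (deriv φ₁) x * φ₂ x := by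
    funext x
    rw [deriv_fun_sub ((d₁ x).fun_mul (d₂' x)) ((d₁' x).fun_mul (d₂ x)),
      deriv_fun_mul (d₁ x) (d₂' x), deriv_fun_mul (d₁' x) (d₂ x)]
    ring
  have e2 : deriv (fun x => φ₁ x * deriv (deriv φ₂) x - deriv (deriv φ₁) x * φ₂ x) =
      fun x => φ₁ x * deriv (deriv (deriv φ₂)) x + deriv φ₁ x * deriv (deriv φ₂) x
        - (deriv (deriv φ₁) x * deriv φ₂ x + deriv (deriv (deriv φ₁)) x * φ₂ x) := by
    funext x
    rw [deriv_fun_sub ((d₁ x).fun_mul (d₂'' x)) ((d₁'' x).fun_mul (d₂ x)),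
      deriv_fun_mul (d₁ x) (d₂'' x), deriv_fun_mul (d₁'' x) (d₂ x)]
    ring
  rw [fderiv_Dvf_apply φ₂ h₂, fderiv_Dvf_apply φ₁ h₁]
  funext i
  fin_cases i <;>
    simp [Dvf, e1, e2, Matrix.cons_val_succ] <;> ring
end

section
/- Let φ, ψ : ℝ → ℝ be smooth (C^∞) functions. Let D(φ) : ℝ⁶ → ℝ⁶ be the vector field on ℝ⁶ with coordinates z = (t, x, u, p, f, g) given by D(φ)(z) = (0, φ(x), 0, −φ'(x)·p, 2φ'(x)·f, φ''(x)·p·f), and let G(ψ) : ℝ⁶ → ℝ⁶ be the vector field G(ψ)(z) = (0, 0, ψ(x), ψ'(x), 0, −ψ''(x)·f). Then the Lie bracket of vector fields satisfies [D(φ), G(ψ)] = G(φ·ψ'), i.e., at every point z ∈ ℝ⁶ one has DW(z)·V(z) − DV(z)·W(z) = G(φψ')(z), where V = D(φ), W = G(ψ) and DV, DW denote their total (Fréchet) derivatives. -/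
/-- The vector field `G(ψ)` on `ℝ⁶` with coordinates `z = (t, x, u, p, f, g)`:
`G(ψ)(z) = (0, 0, ψ(x), ψ'(x), 0, −ψ''(x)f)`. -/
noncomputable def Gvf (ψ : ℝ → ℝ) : (Fin 6 → ℝ) → (Fin 6 → ℝ) := fun z =>
  ![0, 0, ψ (z 1), deriv ψ (z 1), 0, -(deriv (deriv ψ) (z 1)) * z 4]

noncomputable abbrev Pj (i : Fin 6) : (Fin 6 → ℝ) →L[ℝ] ℝ := ContinuousLinearMap.proj i

lemma comp1 {f : ℝ → ℝ} (hf : Differentiable ℝ f) (z : Fin 6 → ℝ) :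
    HasFDerivAt (fun z : Fin 6 → ℝ => f (z 1)) (deriv f (z 1) • Pj 1) z :=
  (hf (z 1)).hasDerivAt.comp_hasFDerivAt z ((Pj 1).hasFDerivAt)

lemma proj_hfd (i : Fin 6) (z : Fin 6 → ℝ) :
    HasFDerivAt (fun z : Fin 6 → ℝ => z i) (Pj i) z := (Pj i).hasFDerivAt

/-- For smooth `φ, ψ` one has the commutation relation `[D(φ), G(ψ)] = G(φψ')`, where the
Lie bracket of vector fields `V, W : ℝ⁶ → ℝ⁶` is `[V, W](z) = DW(z)·V(z) − DV(z)·W(z)`. -/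
theorem lie_bracket_Dvf_Gvf (φ ψ : ℝ → ℝ) (hφ : ContDiff ℝ (⊤ : ℕ∞) φ) (hψ : ContDiff ℝ (⊤ : ℕ∞) ψ) :
    ∀ z : Fin 6 → ℝ,
      fderiv ℝ (Gvf ψ) z (Dvf φ z) - fderiv ℝ (Dvf φ) z (Gvf ψ z) =
        Gvf (fun x => φ x * deriv ψ x) z := by
  intro z
  have hφ' : ContDiff ℝ (⊤ : ℕ∞) φ := hφ.of_le (by simp)
  have hψ' : ContDiff ℝ (⊤ : ℕ∞) ψ := hψ.of_le (by simp)
  have hφ0 : Differentiable ℝ φ := hφ'.differentiable (by simp)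
  have hφc1 : ContDiff ℝ (⊤ : ℕ∞) (deriv φ) := (contDiff_infty_iff_deriv.mp hφ').2
  have hφ1 : Differentiable ℝ (deriv φ) := hφc1.differentiable (by simp)
  have hφ2 : Differentiable ℝ (deriv (deriv φ)) :=
    ((contDiff_infty_iff_deriv.mp hφc1).2).differentiable (by simp)
  have hψ0 : Differentiable ℝ ψ := hψ'.differentiable (by simp)
  have hψc1 : ContDiff ℝ (⊤ : ℕ∞) (deriv ψ) := (contDiff_infty_iff_deriv.mp hψ').2
  have hψ1 : Differentiable ℝ (deriv ψ) := hψc1.differentiable (by simp)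
  have hψ2 : Differentiable ℝ (deriv (deriv ψ)) :=
    ((contDiff_infty_iff_deriv.mp hψc1).2).differentiable (by simp)
  -- derivative of Dvf φ
  have hD : HasFDerivAt (Dvf φ) (ContinuousLinearMap.pi
      ![0,
        deriv φ (z 1) • Pj 1,
        0,
        (-(deriv φ (z 1))) • Pj 3 + z 3 • -(deriv (deriv φ) (z 1) • Pj 1),
        (2 * deriv φ (z 1)) • Pj 4 + z 4 • ((2:ℝ) • (deriv (deriv φ) (z 1) • Pj 1)),
        (deriv (deriv φ) (z 1) * z 3) • Pj 4 +
          z 4 • (deriv (deriv φ) (z 1) • Pj 3 + z 3 • (deriv (deriv (deriv φ)) (z 1) • Pj 1))]) z := by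
    apply hasFDerivAt_pi.mpr
    intro i
    fin_cases i
    · exact hasFDerivAt_const 0 z
    · exact comp1 hφ0 z
    · exact hasFDerivAt_const 0 z
    · exact ((comp1 hφ1 z).neg).mul (proj_hfd 3 z)
    · exact ((comp1 hφ1 z).const_mul 2).mul (proj_hfd 4 z)
    · exact ((comp1 hφ2 z).mul (proj_hfd 3 z)).mul (proj_hfd 4 z)
  have hG : HasFDerivAt (Gvf ψ) (ContinuousLinearMap.pi
      ![0, 0,
        deriv ψ (z 1) • Pj 1,
        deriv (deriv ψ) (z 1) • Pj 1,
        0,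
        (-(deriv (deriv ψ) (z 1))) • Pj 4 + z 4 • -(deriv (deriv (deriv ψ)) (z 1) • Pj 1)]) z := by
    apply hasFDerivAt_pi.mpr
    intro i
    fin_cases i
    · exact hasFDerivAt_const 0 z
    · exact hasFDerivAt_const 0 z
    · exact comp1 hψ0 z
    · exact comp1 hψ1 z
    · exact hasFDerivAt_const 0 z
    · exact ((comp1 hψ2 z).neg).mul (proj_hfd 4 z)
  rw [hD.fderiv, hG.fderiv]
  have e1 : deriv (fun x => φ x * deriv ψ x) =
      fun x => deriv φ x * deriv ψ x + φ x * deriv (deriv ψ) x :=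
    funext fun x => deriv_mul (hφ0 x) (hψ1 x)
  have e2 : deriv (fun x => deriv φ x * deriv ψ x + φ x * deriv (deriv ψ) x) (z 1) =
      deriv (deriv φ) (z 1) * deriv ψ (z 1) + deriv φ (z 1) * deriv (deriv ψ) (z 1) +
        (deriv φ (z 1) * deriv (deriv ψ) (z 1) + φ (z 1) * deriv (deriv (deriv ψ)) (z 1)) := by
    rw [deriv_fun_add ((hφ1 (z 1)).fun_mul (hψ1 (z 1))) ((hφ0 (z 1)).fun_mul (hψ2 (z 1))),
      deriv_fun_mul (hφ1 (z 1)) (hψ1 (z 1)), deriv_fun_mul (hφ0 (z 1)) (hψ2 (z 1))]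
  funext i
  fin_cases i <;>
    simp only [ContinuousLinearMap.pi_apply, Pi.sub_apply, Gvf, Dvf, e1, e2,
      Matrix.cons_val_zero, Matrix.cons_val_one, Matrix.head_cons, Matrix.cons_val_two,
      Matrix.cons_val_zero', Matrix.cons_val_succ', Matrix.tail_cons, Matrix.cons_val_three, Matrix.cons_val_four,
      ContinuousLinearMap.add_apply, ContinuousLinearMap.smul_apply,
      ContinuousLinearMap.neg_apply, ContinuousLinearMap.zero_apply, Pj,
      ContinuousLinearMap.proj_apply, smul_eq_mul] <;>
    ring
end

section
/- Let ζ : ℝ → ℝ be a smooth (C^∞) function. For differentiable functions a, b : ℝ → ℝ define c(a, b) = a·b' − a'·b. Define functions R(j, k) : ℝ → ℝ for integers j ≥ 0 and k ≥ 1 recursively by R(0, k) = (1/k)·c(ζ, ζ^{k+1}) and R(j+1, k) = (1/k)·c(R(j, 1), R(j, k+1)). Then for all j ≥ 0 and k ≥ 1 one has R(j, k) = ζ^k · (ζ·ζ')^{2^{j+1} − 1} (equality of functions on ℝ). -/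
/-- `c(a, b) = a·b' − a'·b`, the coefficient function of the commutator
`[a∂ₓ, b∂ₓ] = c(a,b)∂ₓ` of the vector fields `a∂ₓ` and `b∂ₓ` on `ℝ`. -/
noncomputable def commCoeff (a b : ℝ → ℝ) : ℝ → ℝ := fun x =>
  a x * deriv b x - deriv a x * b x

/-- The recursively defined functions `R(0, k) = (1/k)·c(ζ, ζ^{k+1})` and
`R(j+1, k) = (1/k)·c(R(j, 1), R(j, k+1))`. -/
noncomputable def Rfun (ζ : ℝ → ℝ) : ℕ → ℕ → (ℝ → ℝ)
  | 0, k => fun x => (1 / (k : ℝ)) * commCoeff ζ (fun y => ζ y ^ (k + 1)) x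
  | j + 1, k => fun x => (1 / (k : ℝ)) * commCoeff (Rfun ζ j 1) (Rfun ζ j (k + 1)) x

lemma aux_deriv (ζ : ℝ → ℝ) (hζ : ContDiff ℝ (⊤ : ℕ∞) ζ) (a m : ℕ) (x : ℝ) :
    deriv (fun y => ζ y ^ a * (ζ y * deriv ζ y) ^ m) x =
      ((a : ℝ) * ζ x ^ (a - 1) * deriv ζ x) * (ζ x * deriv ζ x) ^ m
      + ζ x ^ a * ((m : ℝ) * (ζ x * deriv ζ x) ^ (m - 1)
          * deriv (fun y => ζ y * deriv ζ y) x) := by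
  have hd : Differentiable ℝ ζ := hζ.differentiable (by simp)
  have hinf : ContDiff ℝ (⊤ : ℕ∞) ζ := hζ.of_le (by simp)
  have hd' : Differentiable ℝ (deriv ζ) :=
    ((contDiff_infty_iff_deriv.mp hinf).2).differentiable (by simp)
  have hg : Differentiable ℝ (fun y => ζ y * deriv ζ y) := hd.mul hd'
  rw [deriv_fun_mul (c := fun y => ζ y ^ a) (d := fun y => (ζ y * deriv ζ y) ^ m) ((hd.pow a).differentiableAt) ((hg.pow m).differentiableAt),
    deriv_fun_pow hd.differentiableAt a, deriv_fun_pow hg.differentiableAt m]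

/-- For a smooth function `ζ : ℝ → ℝ` one has
`R(j, k) = ζ^k · (ζ·ζ')^{2^{j+1} − 1}` for all `j ≥ 0` and `k ≥ 1`. -/
theorem Rfun_eq (ζ : ℝ → ℝ) (hζ : ContDiff ℝ (⊤ : ℕ∞) ζ) :
    ∀ j : ℕ, ∀ k : ℕ, 1 ≤ k → ∀ x : ℝ,
      Rfun ζ j k x = ζ x ^ k * (ζ x * deriv ζ x) ^ (2 ^ (j + 1) - 1) := by
  have hd : Differentiable ℝ ζ := hζ.differentiable (by simp)
  intro j
  induction j with
  | zero =>
    intro k hk x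
    have hk0 : (k : ℝ) ≠ 0 := Nat.cast_ne_zero.mpr (by omega)
    simp only [Rfun, commCoeff]
    rw [deriv_fun_pow hd.differentiableAt (k + 1)]
    push_cast
    simp only [Nat.add_sub_cancel, pow_one]
    field_simp
    ring
  | succ j ih =>
    intro k hk x
    have hk0 : (k : ℝ) ≠ 0 := Nat.cast_ne_zero.mpr (by omega)
    set m := 2 ^ (j + 1) - 1 with hm
    have hm1 : 1 ≤ m := by
      have h2 : 2 ≤ 2 ^ (j + 1) := by
        calc 2 = 2 ^ 1 := rfl
        _ ≤ 2 ^ (j + 1) := Nat.pow_le_pow_right (by omega) (by omega)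
      omega
    obtain ⟨n, hn⟩ : ∃ n, m = n + 1 := ⟨m - 1, by omega⟩
    have h1 : Rfun ζ j 1 = fun y => ζ y ^ 1 * (ζ y * deriv ζ y) ^ m :=
      funext fun y => ih 1 le_rfl y
    have h2 : Rfun ζ j (k + 1) = fun y => ζ y ^ (k + 1) * (ζ y * deriv ζ y) ^ m :=
      funext fun y => ih (k + 1) (by omega) y
    have hexp : 2 ^ (j + 1 + 1) - 1 = 2 * m + 1 := by
      have : 1 ≤ 2 ^ (j + 1) := Nat.one_le_two_pow
      simp only [hm, pow_succ]
      omega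
    simp only [Rfun, commCoeff, h1, h2, hexp]
    rw [aux_deriv ζ hζ 1 m, aux_deriv ζ hζ (k + 1) m]
    simp only [Nat.add_sub_cancel, hn, pow_one]
    field_simp
    push_cast
    ring
end

section
/- Let f, g : ℝ × ℝ → ℝ be continuous functions and let u : ℝ × ℝ → ℝ be a twice continuously differentiable function satisfying the nonlinear wave equation ∂ₜₜu(t, x) = f(x, ∂ₓu(t, x))·∂ₓₓu(t, x) + g(x, ∂ₓu(t, x)) for all (t, x) ∈ ℝ². Let c₀, c₁, c₂, c₃, c₄ ∈ ℝ with c₁·c₂ ≠ 0, let ψ : ℝ → ℝ be twice continuously differentiable, and let φ : ℝ → ℝ be a twice continuously differentiable bijection whose derivative φ' never vanishes, with inverse χ = φ⁻¹ : ℝ → ℝ. Define ũ : ℝ × ℝ → ℝ by ũ(s, y) = c₂·u((s − c₀)/c₁, χ(y)) + c₄·((s − c₀)/c₁)² + c₃·(s − c₀)/c₁ + ψ(χ(y)), and define f̃, g̃ : ℝ × ℝ → ℝ by f̃(y, q) = (φ'(χ(y)))²/c₁² · f(χ(y), P(y, q)) and g̃(y, q) = (1/c₁²)·( c₂·g(χ(y),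 P(y, q)) + q·φ''(χ(y))·f(χ(y), P(y, q)) − ψ''(χ(y))·f(χ(y), P(y, q)) + 2c₄ ), where P(y, q) = (q·φ'(χ(y)) − ψ'(χ(y)))/c₂. Then ũ is twice continuously differentiable and satisfies ∂ₛₛũ(s, y) = f̃(y, ∂_yũ(s, y))·∂_yyũ(s, y) + g̃(y, ∂_yũ(s, y)) for all (s, y) ∈ ℝ². -/
/-- A general equivalence transformation maps solutions of one nonlinear wave equation
`u_tt = f(x, u_x)·u_xx + g(x, u_x)` to solutions of the transformed one,
`ũ_ss = f̃(y, ũ_y)·ũ_yy + g̃(y, ũ_y)`. -/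
theorem equivalence_transformation_wave_equation
    (f g : ℝ × ℝ → ℝ) (hf : Continuous f) (hg : Continuous g)
    (u : ℝ × ℝ → ℝ) (hu : ContDiff ℝ 2 u)
    (hwave : ∀ t x : ℝ,
      deriv (fun s => deriv (fun s' => u (s', x)) s) t =
        f (x, deriv (fun y => u (t, y)) x) *
          deriv (fun y' => deriv (fun y => u (t, y)) y') x +
        g (x, deriv (fun y => u (t, y)) x))
    (c₀ c₁ c₂ c₃ c₄ : ℝ) (hc : c₁ * c₂ ≠ 0)
    (ψ : ℝ → ℝ) (hψ : ContDiff ℝ 2 ψ)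
    (φ : ℝ → ℝ) (hφ : ContDiff ℝ 2 φ) (hφ' : ∀ x : ℝ, deriv φ x ≠ 0)
    (χ : ℝ → ℝ) (hχφ : ∀ x : ℝ, χ (φ x) = x) (hφχ : ∀ y : ℝ, φ (χ y) = y)
    (P : ℝ → ℝ → ℝ)
    (hP : ∀ y q : ℝ, P y q = (q * deriv φ (χ y) - deriv ψ (χ y)) / c₂)
    (utilde : ℝ × ℝ → ℝ)
    (hut : ∀ s y : ℝ,
      utilde (s, y) = c₂ * u ((s - c₀) / c₁, χ y) + c₄ * ((s - c₀) / c₁) ^ 2 +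
        c₃ * ((s - c₀) / c₁) + ψ (χ y))
    (ftilde : ℝ × ℝ → ℝ)
    (hft : ∀ y q : ℝ,
      ftilde (y, q) = (deriv φ (χ y)) ^ 2 / c₁ ^ 2 * f (χ y, P y q))
    (gtilde : ℝ × ℝ → ℝ)
    (hgt : ∀ y q : ℝ,
      gtilde (y, q) = (1 / c₁ ^ 2) *
        (c₂ * g (χ y, P y q) + q * deriv (deriv φ) (χ y) * f (χ y, P y q) -
          deriv (deriv ψ) (χ y) * f (χ y, P y q) + 2 * c₄)) :
    ContDiff ℝ 2 utilde ∧
      ∀ s y : ℝ,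
        deriv (fun s' => deriv (fun s'' => utilde (s'', y)) s') s =
          ftilde (y, deriv (fun y' => utilde (s, y')) y) *
            deriv (fun y'' => deriv (fun y' => utilde (s, y')) y'') y +
          gtilde (y, deriv (fun y' => utilde (s, y')) y) := by
  have hc₁ : c₁ ≠ 0 := left_ne_zero_of_mul hc
  have hc₂ : c₂ ≠ 0 := right_ne_zero_of_mul hc
  -- continuity of χ
  have hφinj : Function.Injective φ := fun a b h => by rw [← hχφ a, h, hχφ]
  have hχsurj : Function.Surjective χ := fun x => ⟨φ x, hχφ x⟩
  have hχcont : Continuous χ := by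
    rcases hφ.continuous.strictMono_of_inj hφinj with hm | ha
    · have hmono : Monotone χ := fun a b hab => by
        by_contra h
        push_neg at h
        have := hm h
        rw [hφχ, hφχ] at this
        exact absurd hab (not_le.2 this)
      exact hmono.continuous_of_surjective hχsurj
    · have hmono : Monotone (fun y => -χ y) := fun a b hab => by
        simp only [neg_le_neg_iff]
        by_contra h
        push_neg at h
        have := ha h
        rw [hφχ, hφχ] at this
        exact absurd hab (not_le.2 this)
      have hs : Function.Surjective (fun y => -χ y) := fun x => by
        obtain ⟨y, hy⟩ := hχsurj (-x)
        exact ⟨y, show -χ y = x by rw [hy, neg_neg]⟩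
      have h1 := hmono.continuous_of_surjective hs
      have h2 : Continuous (fun y => -(-χ y)) := h1.neg
      simpa using h2
  -- derivative of χ
  have hφd : Differentiable ℝ φ := hφ.differentiable (by norm_num)
  have hχderiv : ∀ y, HasDerivAt χ (deriv φ (χ y))⁻¹ y := fun y =>
    HasDerivAt.of_local_left_inverse hχcont.continuousAt
      (hφd (χ y)).hasDerivAt (hφ' (χ y)) (Filter.Eventually.of_forall hφχ)
  have hχd : Differentiable ℝ χ := fun y => (hχderiv y).differentiableAt
  have hχderiv' : deriv χ = fun y => (deriv φ (χ y))⁻¹ :=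
    funext fun y => (hχderiv y).deriv
  have hφ'c1 : ContDiff ℝ 1 (deriv φ) := by
    have h := hφ
    rw [show (2 : WithTop ℕ∞) = 1 + 1 by norm_num, contDiff_succ_iff_deriv] at h
    exact h.2.2
  have hψ'c1 : ContDiff ℝ 1 (deriv ψ) := by
    have h := hψ
    rw [show (2 : WithTop ℕ∞) = 1 + 1 by norm_num, contDiff_succ_iff_deriv] at h
    exact h.2.2
  have hχc1 : ContDiff ℝ 1 χ := by
    rw [contDiff_one_iff_deriv]
    refine ⟨hχd, ?_⟩
    rw [hχderiv']
    exact ((hφ'c1.continuous.comp hχcont).inv₀ fun y => hφ' (χ y))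
  have hχc2 : ContDiff ℝ 2 χ := by
    rw [show (2 : WithTop ℕ∞) = 1 + 1 by norm_num, contDiff_succ_iff_deriv]
    refine ⟨hχd, by simp, ?_⟩
    rw [hχderiv']
    exact (hφ'c1.comp hχc1).inv fun y => hφ' (χ y)
  -- smoothness of utilde
  have hutilde_eq : utilde = fun p : ℝ × ℝ =>
      c₂ * u ((p.1 - c₀) / c₁, χ p.2) + c₄ * ((p.1 - c₀) / c₁) ^ 2 +
        c₃ * ((p.1 - c₀) / c₁) + ψ (χ p.2) := by
    funext p
    obtain ⟨s, y⟩ := p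
    exact hut s y
  have hsmooth : ContDiff ℝ 2 utilde := by
    rw [hutilde_eq]
    have ha : ContDiff ℝ 2 (fun p : ℝ × ℝ => (p.1 - c₀) / c₁) :=
      (contDiff_fst.sub contDiff_const).div_const c₁
    have hb : ContDiff ℝ 2 (fun p : ℝ × ℝ => χ p.2) := hχc2.comp contDiff_snd
    exact (((contDiff_const.mul (hu.comp (ha.prodMk hb))).add
      (contDiff_const.mul (ha.pow 2))).add (contDiff_const.mul ha)).add (hψ.comp hb)
  refine ⟨hsmooth, fun s y => ?_⟩
  -- fixed point data
  set t : ℝ := (s - c₀) / c₁ with ht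
  set x : ℝ := χ y with hx
  -- partial derivative machinery for u
  have hu2x : ∀ t', ContDiff ℝ 2 (fun x' => u (t', x')) := fun t' =>
    hu.comp (contDiff_const.prodMk contDiff_id)
  have hu2t : ∀ x', ContDiff ℝ 2 (fun t' => u (t', x')) := fun x' =>
    hu.comp (contDiff_id.prodMk contDiff_const)
  have hux : ∀ t' x', HasDerivAt (fun x'' => u (t', x''))
      (deriv (fun x'' => u (t', x'')) x') x' := fun t' x' =>
    (((hu2x t').differentiable (by norm_num)) x').hasDerivAt
  have huxx : ∀ t' x', HasDerivAt (fun x'' => deriv (fun x''' => u (t', x''')) x'')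
      (deriv (fun x'' => deriv (fun x''' => u (t', x''')) x'') x') x' := fun t' x' => by
    have h := hu2x t'
    rw [show (2 : WithTop ℕ∞) = 1 + 1 by norm_num, contDiff_succ_iff_deriv] at h
    exact ((h.2.2.differentiable one_ne_zero) x').hasDerivAt
  have hut' : ∀ t' x', HasDerivAt (fun t'' => u (t'', x'))
      (deriv (fun t'' => u (t'', x')) t') t' := fun t' x' =>
    (((hu2t x').differentiable (by norm_num)) t').hasDerivAt
  have hutt : ∀ t' x', HasDerivAt (fun t'' => deriv (fun t''' => u (t''', x')) t'')
      (deriv (fun t'' => deriv (fun t''' => u (t''', x')) t'') t') t' := fun t' x' => by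
    have h := hu2t x'
    rw [show (2 : WithTop ℕ∞) = 1 + 1 by norm_num, contDiff_succ_iff_deriv] at h
    exact ((h.2.2.differentiable one_ne_zero) t').hasDerivAt
  have hψd : ∀ x', HasDerivAt ψ (deriv ψ x') x' :=
    fun x' => ((hψ.differentiable (by norm_num)) x').hasDerivAt
  have hψdd : ∀ x', HasDerivAt (deriv ψ) (deriv (deriv ψ) x') x' :=
    fun x' => ((hψ'c1.differentiable one_ne_zero) x').hasDerivAt
  have hφdd : ∀ x', HasDerivAt (deriv φ) (deriv (deriv φ) x') x' :=
    fun x' => ((hφ'c1.differentiable one_ne_zero) x').hasDerivAt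
  -- y-derivative of utilde at fixed s (for all y')
  have hDy : ∀ y', HasDerivAt (fun y'' => utilde (s, y''))
      ((c₂ * deriv (fun x'' => u (t, x'')) (χ y') + deriv ψ (χ y')) *
        (deriv φ (χ y'))⁻¹) y' := by
    intro y'
    have heq : (fun y'' => utilde (s, y'')) = fun y'' =>
        c₂ * u (t, χ y'') + c₄ * t ^ 2 + c₃ * t + ψ (χ y'') :=
      funext fun y'' => hut s y''
    rw [heq]
    have h1 : HasDerivAt (fun y'' => u (t, χ y''))
        (deriv (fun x'' => u (t, x'')) (χ y') * (deriv φ (χ y'))⁻¹) y' :=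
      (hux t (χ y')).comp y' (hχderiv y')
    have h2 : HasDerivAt (fun y'' => ψ (χ y''))
        (deriv ψ (χ y') * (deriv φ (χ y'))⁻¹) y' :=
      (hψd (χ y')).comp y' (hχderiv y')
    have h3 := (((h1.const_mul c₂).add_const (c₄ * t ^ 2)).add_const (c₃ * t)).add h2
    exact h3.congr_deriv (by ring)
  have hDyval : ∀ y', deriv (fun y'' => utilde (s, y'')) y' =
      (c₂ * deriv (fun x'' => u (t, x'')) (χ y') + deriv ψ (χ y')) *
        (deriv φ (χ y'))⁻¹ := fun y' => (hDy y').deriv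
  -- second y-derivative at y
  set A : ℝ := deriv φ x with hA
  set B : ℝ := deriv (deriv φ) x with hB
  set C : ℝ := deriv ψ x with hC
  set D : ℝ := deriv (deriv ψ) x with hD
  set U : ℝ := deriv (fun x'' => u (t, x'')) x with hU
  set V : ℝ := deriv (fun x'' => deriv (fun x''' => u (t, x''')) x'') x with hV
  have hAne : A ≠ 0 := hφ' x
  have hDyy : deriv (fun y'' => deriv (fun y' => utilde (s, y')) y'') y =
      (c₂ * (V * A⁻¹) + D * A⁻¹) * A⁻¹ +
        (c₂ * U + C) * (-(B * A⁻¹) / (A) ^ 2) := by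
    have heq : (fun y'' => deriv (fun y' => utilde (s, y')) y'') = fun y'' =>
        (c₂ * deriv (fun x'' => u (t, x'')) (χ y'') + deriv ψ (χ y'')) *
          (deriv φ (χ y''))⁻¹ := funext fun y'' => hDyval y''
    rw [heq]
    have h1 : HasDerivAt (fun y'' => deriv (fun x'' => u (t, x'')) (χ y''))
        (V * A⁻¹) y := (huxx t x).comp y (hχderiv y)
    have h2 : HasDerivAt (fun y'' => deriv ψ (χ y'')) (D * A⁻¹) y :=
      (hψdd x).comp y (hχderiv y)
    have h3 : HasDerivAt (fun y'' => deriv φ (χ y'')) (B * A⁻¹) y :=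
      (hφdd x).comp y (hχderiv y)
    have h4 : HasDerivAt (fun y'' => (deriv φ (χ y''))⁻¹)
        (-(B * A⁻¹) / (deriv φ (χ y)) ^ 2) y := h3.inv (by rw [← hx]; exact hAne)
    have h5 := ((h1.const_mul c₂).add h2).mul h4
    exact h5.deriv
  -- time derivatives
  have haff : ∀ s', HasDerivAt (fun s'' => (s'' - c₀) / c₁) (1 / c₁) s' := fun s' => by
    have := ((hasDerivAt_id s').sub_const c₀).div_const c₁
    simpa using this
  have hDt : ∀ s', deriv (fun s'' => utilde (s'', y)) s' =
      c₂ * (deriv (fun t'' => u (t'', x)) ((s' - c₀) / c₁) * (1 / c₁)) +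
        c₄ * (2 * ((s' - c₀) / c₁) * (1 / c₁)) + c₃ * (1 / c₁) := by
    intro s'
    have heq : (fun s'' => utilde (s'', y)) = fun s'' =>
        c₂ * u ((s'' - c₀) / c₁, x) + c₄ * ((s'' - c₀) / c₁) ^ 2 +
          c₃ * ((s'' - c₀) / c₁) + ψ x :=
      funext fun s'' => hut s'' y
    rw [heq]
    have h1 : HasDerivAt (fun s'' => u ((s'' - c₀) / c₁, x))
        (deriv (fun t'' => u (t'', x)) ((s' - c₀) / c₁) * (1 / c₁)) s' :=
      by have := (hut' ((s' - c₀) / c₁) x).comp s' (haff s'); exact this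
    have h2 : HasDerivAt (fun s'' => ((s'' - c₀) / c₁) ^ 2)
        (2 * ((s' - c₀) / c₁) * (1 / c₁)) s' := by
      have := (haff s').pow 2
      norm_num at this
      exact this.congr_deriv (by ring)
    have h3 := ((((h1.const_mul c₂).add (h2.const_mul c₄)).add
      ((haff s').const_mul c₃)).add_const (ψ x))
    exact h3.deriv
  have hDtt : deriv (fun s' => deriv (fun s'' => utilde (s'', y)) s') s =
      c₂ * (deriv (fun t'' => deriv (fun t''' => u (t''', x)) t'') t * (1 / c₁) * (1 / c₁)) +
        c₄ * (2 * (1 / c₁) * (1 / c₁)) := by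
    have heq : (fun s' => deriv (fun s'' => utilde (s'', y)) s') = fun s' =>
        c₂ * (deriv (fun t'' => u (t'', x)) ((s' - c₀) / c₁) * (1 / c₁)) +
          c₄ * (2 * ((s' - c₀) / c₁) * (1 / c₁)) + c₃ * (1 / c₁) :=
      funext fun s' => hDt s'
    rw [heq]
    have h1 : HasDerivAt (fun s' => deriv (fun t'' => u (t'', x)) ((s' - c₀) / c₁))
        (deriv (fun t'' => deriv (fun t''' => u (t''', x)) t'') t * (1 / c₁)) s :=
      by have := (hutt t x).comp s (haff s); exact this
    have h2 : HasDerivAt (fun s' => (s' - c₀) / c₁) (1 / c₁) s := haff s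
    have h3 := (((h1.mul_const (1 / c₁)).const_mul c₂).add
      (((h2.const_mul 2).mul_const (1 / c₁)).const_mul c₄)).add_const (c₃ * (1 / c₁))
    exact h3.deriv
  -- the value q of the first y-derivative
  have hq : deriv (fun y' => utilde (s, y')) y = (c₂ * U + C) * A⁻¹ := by
    rw [hDyval y, ← hx, ← hA, ← hC, ← hU]
  have hPq : P y ((c₂ * U + C) * A⁻¹) = U := by
    rw [hP, ← hx, ← hA, ← hC]
    field_simp
    ring
  -- assemble
  rw [hDtt, hq, hDyy, hft, hgt, hPq, ← hx, ← hA, ← hB, ← hD]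
  have hw := hwave t x
  rw [← hU, ← hV] at hw
  rw [hw]
  field_simp
  ring
end
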